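/- arXiv:1408.5015 — 3 statements merged into one kernel-verified Lean document; each statement's English description precedes it below -/
import Mathlib

section
/- There exists an open set U in the product space [0,1] × ℕ (where [0,1] carries its usual topology and ℕ is discrete) such that for every subset S ⊆ ℕ there is exactly one point x ∈ [0,1] with horizontal section U(x) = {n ∈ ℕ : (x,n) ∈ U} equal to S. In other words, [0,1] × ω has the Uniquely Universal property. -/
namespace UU


noncomputable def c (k : ℕ) (x : ℝ) : ℤ := ⌈(2:ℝ)^k * x⌉

def gray (n : ℕ) (x : ℝ) : Prop := c n x % 2 ≠ c (n+1) x % 2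

lemma c_sand_left (k : ℕ) (x : ℝ) : (c k x : ℝ) - 1 < 2^k * x := by
  have := Int.ceil_lt_add_one ((2:ℝ)^k * x)
  unfold c; linarith

lemma c_sand_right (k : ℕ) (x : ℝ) : 2^k * x ≤ (c k x : ℝ) := Int.le_ceil _

lemma c_eq_iff {k : ℕ} {x : ℝ} {z : ℤ} :
    c k x = z ↔ ((z:ℝ) - 1 < 2^k * x ∧ 2^k * x ≤ (z:ℝ)) := Int.ceil_eq_iff

lemma c_zero {x : ℝ} (h0 : 0 < x) (h1 : x ≤ 1) : c 0 x = 1 := by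
  rw [c_eq_iff]; push_cast; constructor <;> nlinarith

lemma c_succ_branch (k : ℕ) (x : ℝ) :
    c (k+1) x = 2 * c k x ∨ c (k+1) x = 2 * c k x - 1 := by
  have hp : (2:ℝ)^(k+1) * x = 2 * (2^k * x) := by ring
  have h1 : c (k+1) x ≤ 2 * c k x := by
    unfold c
    rw [hp]
    calc ⌈2 * ((2:ℝ)^k * x)⌉ ≤ ⌈2 * ((c k x : ℝ))⌉ := by
          apply Int.ceil_le_ceil; nlinarith [c_sand_right k x]
      _ = 2 * c k x := by
          rw [show (2 * ((c k x : ℝ))) = ((2 * c k x : ℤ) : ℝ) by push_cast; ring,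
            Int.ceil_intCast]
  have h2 : 2 * c k x - 2 < c (k+1) x := by
    have hlt : ((2 * c k x - 2 : ℤ) : ℝ) < 2^(k+1) * x := by
      have := c_sand_left k x; push_cast; rw [hp]; nlinarith
    exact Int.lt_ceil.mpr hlt
  omega

lemma c_determined {k : ℕ} {x y : ℝ} (h : c (k+1) x = c (k+1) y) : c k x = c k y := by
  rcases c_succ_branch k x with hx | hx <;> rcases c_succ_branch k y with hy | hy <;> omega

lemma eq_of_gray_eq {x y : ℝ} (hx0 : 0 < x) (hx1 : x ≤ 1) (hy0 : 0 < y) (hy1 : y ≤ 1)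
    (h : ∀ n, gray n x ↔ gray n y) : x = y := by
  have hc : ∀ n, c n x = c n y := by
    intro n
    induction n with
    | zero => rw [c_zero hx0 hx1, c_zero hy0 hy1]
    | succ k ih =>
      have hg := h k
      unfold gray at hg
      rcases c_succ_branch k x with h1 | h1 <;> rcases c_succ_branch k y with h2 | h2 <;> omega
  by_contra hne
  have habs : 0 < |x - y| := abs_pos.mpr (sub_ne_zero.mpr hne)
  obtain ⟨n, hn⟩ := pow_unbounded_of_one_lt (1 / |x - y|) (by norm_num : (1:ℝ) < 2)
  have h1 : |2^n * x - 2^n * y| < 1 := by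
    have a1 := c_sand_left n x
    have a2 := c_sand_right n x
    have a3 := c_sand_left n y
    have a4 := c_sand_right n y
    rw [hc n] at a1 a2
    rw [abs_lt]; constructor <;> linarith
  rw [show (2:ℝ)^n * x - 2^n * y = 2^n * (x - y) by ring, abs_mul, abs_pow, abs_two] at h1
  rw [div_lt_iff₀ habs] at hn
  nlinarith [pow_pos (by norm_num : (0:ℝ) < 2) n]




/-- x is a grid point at scale k -/
def grid (k : ℕ) (x : ℝ) : Prop := ∃ t : ℤ, (t:ℝ) = 2^k * x

noncomputable def val : List Bool → ℝ
  | [] => 1/2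
  | false :: w => val w / 2
  | true :: w => 1 - val w / 2

lemma val_mem (w : List Bool) : 0 < val w ∧ val w < 1 := by
  induction w with
  | nil => norm_num [val]
  | cons b w ih =>
    cases b <;> simp only [val] <;> constructor <;> linarith [ih.1, ih.2]

lemma val_inj : ∀ w₁ w₂ : List Bool, val w₁ = val w₂ → w₁ = w₂ := by
  intro w₁
  induction w₁ with
  | nil =>
    intro w₂ h
    match w₂ with
    | [] => rfl
    | false :: w => exfalso; simp only [val] at h; linarith [(val_mem w).2]
    | true :: w => exfalso; simp only [val] at h; linarith [(val_mem w).2]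
  | cons b w ih =>
    intro w₂ h
    match b, w₂ with
    | false, [] => exfalso; simp only [val] at h; linarith [(val_mem w).2]
    | true, [] => exfalso; simp only [val] at h; linarith [(val_mem w).2]
    | false, false :: w' => simp only [val] at h; rw [ih w' (by linarith)]
    | false, true :: w' =>
      exfalso; simp only [val] at h; linarith [(val_mem w).2, (val_mem w').2]
    | true, false :: w' =>
      exfalso; simp only [val] at h; linarith [(val_mem w).2, (val_mem w').2]
    | true, true :: w' => simp only [val] at h; rw [ih w' (by linarith)]

lemma val_surj : ∀ (k : ℕ) (t : ℤ) (x : ℝ), x = (t:ℝ) / 2^k → 0 < x → x < 1 →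
    ∃ w, val w = x := by
  intro k
  induction k with
  | zero =>
    intro t x hx h0 h1
    exfalso
    rw [hx] at h0 h1
    norm_num at h0 h1
    have h0' : 0 < t := by exact_mod_cast h0
    have h1' : t < 1 := by exact_mod_cast h1
    omega
  | succ k ih =>
    intro t x hx h0 h1
    rcases lt_trichotomy x (1/2) with h | h | h
    · obtain ⟨w, hw⟩ := ih t (2*x)
        (by rw [hx]; rw [pow_succ]; field_simp) (by linarith) (by linarith)
      exact ⟨false :: w, by simp only [val]; linarith⟩
    · exact ⟨[], by simp only [val]; linarith⟩
    · obtain ⟨w, hw⟩ := ih (2^(k+1) - t) (2 - 2*x)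
        (by rw [hx]; push_cast; rw [pow_succ]; field_simp)
        (by linarith) (by linarith)
      exact ⟨true :: w, by simp only [val]; linarith⟩

lemma val_ngrid (w : List Bool) : (∀ k ≤ w.length, ¬ grid k (val w)) ∧
    (∃ s : ℤ, Odd s ∧ (s:ℝ) = 2^(w.length+1) * val w) := by
  induction w with
  | nil =>
    constructor
    · intro k hk
      have hk0 : k = 0 := by simpa using hk
      subst hk0
      rintro ⟨t, ht⟩
      simp only [val, pow_zero, one_mul] at ht
      have h0 : (0:ℝ) < t := by rw [ht]; norm_num
      have h1 : (t:ℝ) < 1 := by rw [ht]; norm_num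
      have h0' : 0 < t := by exact_mod_cast h0
      have h1' : t < 1 := by exact_mod_cast h1
      omega
    · exact ⟨1, ⟨0, by ring⟩, by norm_num [val]⟩
  | cons b w ih =>
    have key : ∀ k : ℕ, (2:ℝ)^(k+1) * val (b :: w) =
        (if b then 2^(k+1) else 0) + (if b then -1 else 1) * (2^k * val w) := by
      intro k
      cases b <;> simp only [val, if_true, if_false, Bool.false_eq_true] <;> rw [pow_succ] <;> ring
    have hgr : ∀ k : ℕ, grid (k+1) (val (b :: w)) ↔ grid k (val w) := by
      intro k
      constructor
      · rintro ⟨t, ht⟩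
        rw [key k] at ht
        cases b
        · exact ⟨t, by simpa using ht⟩
        · refine ⟨2^(k+1) - t, ?_⟩
          push_cast
          simp only [if_true] at ht
          linarith
      · rintro ⟨t, ht⟩
        cases b
        · exact ⟨t, by rw [key k]; simpa using ht⟩
        · refine ⟨2^(k+1) - t, ?_⟩
          rw [key k]; push_cast; simp only [if_true]; linarith
    constructor
    · intro k hk
      match k with
      | 0 =>
        rintro ⟨t, ht⟩
        simp only [pow_zero, one_mul] at ht
        have h0 : (0:ℝ) < t := by rw [ht]; exact (val_mem _).1
        have h1 : (t:ℝ) < 1 := by rw [ht]; exact (val_mem _).2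
        have h0' : 0 < t := by exact_mod_cast h0
        have h1' : t < 1 := by exact_mod_cast h1
        omega
      | k + 1 =>
        rw [hgr k]
        exact ih.1 k (by simpa using hk)
    · obtain ⟨s, hs, hseq⟩ := ih.2
      refine ⟨(if b then 2^(w.length+2) - s else s), ?_, ?_⟩
      · cases b
        · simpa using hs
        · simp only [if_true]
          rcases hs with ⟨j, hj⟩
          exact ⟨2^(w.length+1) - j - 1, by rw [hj]; push_cast; ring⟩
      · have := key (w.length + 1)
        simp only [List.length_cons]
        rw [show w.length + 1 + 1 = (w.length + 1) + 1 by ring, this]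
        cases b
        · simpa using hseq
        · push_cast
          simp only [if_true]
          rw [show ((2:ℝ)^(w.length+1+1)) = 2^(w.length+2) by norm_num]
          linarith



lemma floor_of_ngrid {t : ℝ} (h : ¬ ∃ z : ℤ, (z:ℝ) = t) : ⌊t⌋ = ⌈t⌉ - 1 := by
  have h1 := Int.ceil_le_floor_add_one t
  have h2 : ⌊t⌋ < ⌈t⌉ := by
    by_contra hc
    push_neg at hc
    have a1 := Int.le_ceil t
    have a2 := Int.floor_le t
    have : (⌈t⌉ : ℝ) ≤ ⌊t⌋ := by exact_mod_cast hc
    exact h ⟨⌊t⌋, le_antisymm a2 (by linarith)⟩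
  omega

lemma c_cons_false (k : ℕ) (w : List Bool) :
    c (k+1) (val (false :: w)) = c k (val w) := by
  unfold c
  congr 1
  simp only [val]
  ring

lemma c_cons_true (k : ℕ) (w : List Bool) (h : ¬ grid k (val w)) :
    c (k+1) (val (true :: w)) = 2^(k+1) + 1 - c k (val w) := by
  unfold c
  have harg : (2:ℝ)^(k+1) * val (true :: w) = -(2^k * val w) + ((2^(k+1) : ℤ) : ℝ) := by
    simp only [val]; push_cast; ring
  rw [harg, Int.ceil_add_intCast, Int.ceil_neg,
    floor_of_ngrid (by intro ⟨z, hz⟩; exact h ⟨z, hz⟩)]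
  ring

lemma c_val_zero (w : List Bool) : c 0 (val w) = 1 :=
  c_zero (val_mem w).1 (le_of_lt (val_mem w).2)

lemma two_pow_emod (k : ℕ) : (2:ℤ)^(k+1) % 2 = 0 := by
  have : (2:ℤ)^(k+1) = 2 * 2^k := by rw [pow_succ]; ring
  omega

lemma gray_zero_cons (b : Bool) (w : List Bool) :
    gray 0 (val (b :: w)) ↔ b = true := by
  unfold gray
  rw [c_val_zero]
  cases b
  · rw [show (0+1) = 0+1 from rfl, c_cons_false 0 w, c_val_zero]
    simp
  · rw [c_cons_true 0 w ((val_ngrid w).1 0 (Nat.zero_le _)), c_val_zero]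
    simp

lemma gray_succ_cons (b : Bool) (w : List Bool) (n : ℕ) (hn : n + 1 ≤ w.length) :
    gray (n+1) (val (b :: w)) ↔ gray n (val w) := by
  unfold gray
  cases b
  · rw [c_cons_false n w, c_cons_false (n+1) w]
  · rw [c_cons_true n w ((val_ngrid w).1 n (by omega)),
      c_cons_true (n+1) w ((val_ngrid w).1 (n+1) hn)]
    have h1 := two_pow_emod n
    have h2 := two_pow_emod (n+1)
    omega

lemma gray_val (w : List Bool) (n : ℕ) (hn : n < w.length) :
    (gray n (val w) ↔ w.getD n false = true) := by
  induction w generalizing n with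
  | nil => simp at hn
  | cons b w ih =>
    match n with
    | 0 => simpa using gray_zero_cons b w
    | n + 1 =>
      simp only [List.length_cons] at hn
      rw [gray_succ_cons b w n (by omega)]
      simpa using ih n (by omega)

lemma c_val_high (w : List Bool) {s : ℤ} (hs : (s:ℝ) = 2^(w.length+1) * val w) (j : ℕ) :
    c (w.length + 1 + j) (val w) = 2^j * s := by
  unfold c
  have : (2:ℝ)^(w.length+1+j) * val w = ((2^j * s : ℤ) : ℝ) := by
    push_cast
    rw [hs, pow_add]
    ring
  rw [this, Int.ceil_intCast]

lemma gray_val_high (w : List Bool) (n : ℕ) (hn : w.length + 2 ≤ n) :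
    ¬ gray n (val w) := by
  obtain ⟨s, hsodd, hs⟩ := (val_ngrid w).2
  obtain ⟨j, hj⟩ : ∃ j, n = w.length + 1 + (j + 1) := ⟨n - w.length - 2, by omega⟩
  subst hj
  unfold gray
  rw [c_val_high w hs, show w.length + 1 + (j+1) + 1 = w.length + 1 + (j+2) by ring,
    c_val_high w hs]
  have h1 : (2:ℤ)^(j+1) * s = 2 * (2^j * s) := by rw [pow_succ]; ring
  have h2 : (2:ℤ)^(j+2) * s = 2 * (2^(j+1) * s) := by rw [pow_succ]; ring
  simp only [not_not, ne_eq, not_ne_iff]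
  omega



def strip : List Bool → List Bool
  | true :: false :: l => strip l
  | l => l

def flagw (w : List Bool) : Bool :=
  match strip w.reverse with
  | [true] => true
  | true :: _ :: _ => false
  | _ => true

def toPat (w : List Bool) : List Bool := if flagw w then w ++ [false, true] else w

lemma strip_cons (l : List Bool) : strip (true :: false :: l) = strip l := by
  simp [strip]

lemma strip_tt (l : List Bool) : strip (true :: true :: l) = true :: true :: l := by
  simp [strip]

lemma strip_nil : strip ([] : List Bool) = [] := by simp [strip]
lemma strip_f (l : List Bool) : strip (false :: l) = false :: l := by
  cases l <;> simp [strip]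
lemma strip_single : strip [true] = [true] := by simp [strip]

lemma flagw_append (w : List Bool) : flagw (w ++ [false, true]) = flagw w := by
  unfold flagw
  rw [show (w ++ [false, true]).reverse = true :: false :: w.reverse by simp]
  rw [strip_cons]

lemma toPat_inj {w₁ w₂ : List Bool} (h : toPat w₁ = toPat w₂) : w₁ = w₂ := by
  unfold toPat at h
  by_cases h1 : flagw w₁ = true <;> by_cases h2 : flagw w₂ = true
  · rw [if_pos h1, if_pos h2] at h
    simpa using h
  · rw [if_pos h1, if_neg h2] at h
    exfalso
    rw [← h, flagw_append, h1] at h2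
    exact h2 rfl
  · rw [if_neg h1, if_pos h2] at h
    exfalso
    rw [h, flagw_append, h2] at h1
    exact h1 rfl
  · rw [if_neg h1, if_neg h2] at h
    exact h

lemma strip_headD {l : List Bool} (h : (strip l).headD false = true) :
    l.headD false = true := by
  match l with
  | [] => rw [strip_nil] at h; simp at h
  | true :: l' => rfl
  | false :: l' => rw [strip_f] at h; simp at h

lemma plain_head {w : List Bool} (h : flagw w = false) :
    w.reverse.headD false = true := by
  unfold flagw at h
  apply strip_headD
  rcases hs : strip w.reverse with _ | ⟨b, l⟩
  · rw [hs] at h; simp at h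
  · rw [hs] at h
    match b, l with
    | true, [] => simp at h
    | true, x :: l' => rfl
    | false, l => simp at h

lemma toPat_last (w : List Bool) : (toPat w).reverse.headD false = true := by
  by_cases h : flagw w = true
  · rw [toPat, if_pos h,
      show (w ++ [false, true]).reverse = true :: false :: w.reverse by simp]
    rfl
  · have hf : flagw w = false := by simpa using h
    rw [toPat, if_neg h]
    exact plain_head hf

lemma toPat_surj {v : List Bool} (hlast : v.reverse.headD false = true)
    (hne : v ≠ [true]) : ∃ w, toPat w = v := by
  by_cases hf : flagw v = true
  · rcases hv : v.reverse with _ | ⟨b, r⟩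
    · rw [hv] at hlast; simp at hlast
    rw [hv] at hlast
    have hb : b = true := hlast
    subst hb
    match r, hv with
    | [], hv =>
      exfalso
      apply hne
      have : v.reverse.reverse = [true].reverse.reverse := by rw [hv]; simp
      simpa using this
    | true :: r', hv =>
      exfalso
      unfold flagw at hf
      rw [hv, strip_tt] at hf
      simp at hf
    | false :: r', hv =>
      refine ⟨r'.reverse, ?_⟩
      have hwrev : r'.reverse.reverse = r' := by simp
      have hfw : flagw r'.reverse = true := by
        unfold flagw at hf ⊢
        rw [hwrev]
        rw [hv, strip_cons] at hf
        exact hf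
      rw [toPat, if_pos hfw]
      have hrr : (r'.reverse ++ [false, true]).reverse = v.reverse := by
        rw [hv]; simp
      have := congrArg List.reverse hrr
      simpa using this
  · exact ⟨v, by rw [toPat, if_neg hf]⟩

lemma getD_last {l : List Bool} (h : l ≠ []) :
    l.getD (l.length - 1) false = l.reverse.headD false := by
  rcases List.eq_nil_or_concat l with rfl | ⟨l', b, rfl⟩
  · simp at h
  · simp only [List.concat_eq_append, List.reverse_append, List.reverse_cons,
      List.reverse_nil, List.nil_append, List.singleton_append, List.headD_cons]
    rw [List.length_append]
    simp only [List.length_cons, List.length_nil]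
    rw [show l'.length + (0+1) - 1 = l'.length by omega]
    rw [List.getD_append_right l' [b] false l'.length (le_refl _)]
    simp

lemma canon_ext {l₁ l₂ : List Bool} (h1 : l₁.reverse.headD false = true)
    (h2 : l₂.reverse.headD false = true)
    (h : ∀ n, l₁.getD n false = l₂.getD n false) : l₁ = l₂ := by
  have hne1 : l₁ ≠ [] := by rintro rfl; simp at h1
  have hne2 : l₂ ≠ [] := by rintro rfl; simp at h2
  have hlen : l₁.length = l₂.length := by
    by_contra hl
    rcases Nat.lt_or_ge l₁.length l₂.length with hlt | hge
    · have e1 : l₂.getD (l₂.length - 1) false = true := (getD_last hne2).trans h2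
      have e2 : l₁.getD (l₂.length - 1) false = false :=
        List.getD_eq_default _ _ (by omega)
      rw [← h] at e1
      rw [e1] at e2
      exact absurd e2 (by simp)
    · have hlt : l₂.length < l₁.length := by omega
      have e1 : l₁.getD (l₁.length - 1) false = true := (getD_last hne1).trans h1
      have e2 : l₂.getD (l₁.length - 1) false = false :=
        List.getD_eq_default _ _ (by omega)
      rw [h] at e1
      rw [e1] at e2
      exact absurd e2 (by simp)
  apply List.ext_getElem hlen
  intro i hi1 hi2
  have := h i
  rwa [List.getD_eq_getElem _ _ hi1, List.getD_eq_getElem _ _ hi2] at this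

lemma toPat_bit_low {w : List Bool} {n : ℕ} (hn : n < w.length) :
    (toPat w).getD n false = w.getD n false := by
  rw [toPat]
  split
  · rw [List.getD_append _ _ _ _ hn]
  · rfl

lemma toPat_bit_high {w : List Bool} {n : ℕ} (hn : w.length ≤ n) :
    ((toPat w).getD n false = true ↔ (flagw w = true ∧ n = w.length + 1)) := by
  rw [toPat]
  split_ifs with hf
  · constructor
    · intro h
      refine ⟨hf, ?_⟩
      by_contra hne
      rcases Nat.lt_or_ge n (w.length + 2) with hlt | hge
      · have hn1 : n = w.length := by omega
        subst hn1
        rw [List.getD_append_right w [false, true] false w.length (le_refl _)] at h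
        simp at h
      · rw [List.getD_eq_default] at h
        · simp at h
        · simp only [List.length_append, List.length_cons, List.length_nil]
          omega
    · rintro ⟨-, rfl⟩
      rw [List.getD_append_right w [false, true] false (w.length + 1) (by omega)]
      rw [show w.length + 1 - w.length = 1 by omega]
      rfl
  · constructor
    · intro h
      rw [List.getD_eq_default _ _ hn] at h
      simp at h
    · rintro ⟨hf2, -⟩
      simp_all



noncomputable def serf (d : ℕ → Bool) (i : ℕ) : ℝ := if d i then ((2:ℝ)^(i+1))⁻¹ else 0

noncomputable def ser (d : ℕ → Bool) : ℝ := ∑' i, serf d i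

def Nacc (d : ℕ → Bool) : ℕ → ℤ
  | 0 => if d 0 then 1 else 0
  | n+1 => 2 * Nacc d n + (if d (n+1) then 1 else 0)

lemma serf_nonneg (d : ℕ → Bool) (i : ℕ) : 0 ≤ serf d i := by
  unfold serf; split
  · positivity
  · exact le_refl 0

lemma serf_le (d : ℕ → Bool) (i : ℕ) : serf d i ≤ ((2:ℝ)^(i+1))⁻¹ := by
  unfold serf; split
  · exact le_refl _
  · positivity

lemma summable_pow_inv : Summable (fun i : ℕ => ((2:ℝ)^(i+1))⁻¹) := by
  have : (fun i : ℕ => ((2:ℝ)^(i+1))⁻¹) = fun i : ℕ => (1/2 : ℝ)^(i+1) := by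
    funext i
    rw [div_pow, one_pow, one_div]
  rw [this]
  exact (summable_nat_add_iff 1).mpr summable_geometric_two

lemma serf_summable (d : ℕ → Bool) : Summable (serf d) :=
  Summable.of_nonneg_of_le (serf_nonneg d) (serf_le d) summable_pow_inv

lemma tail_le (d : ℕ → Bool) (k : ℕ) : ∑' i, serf d (i + k) ≤ ((2:ℝ)^k)⁻¹ := by
  have h1 : ∑' i, serf d (i + k) ≤ ∑' i : ℕ, ((2:ℝ)^(i + k + 1))⁻¹ := by
    apply Summable.tsum_le_tsum (fun i => serf_le d (i+k))
      ((serf_summable d).comp_injective (add_left_injective k))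
      (summable_pow_inv.comp_injective (add_left_injective k))
  have h2 : ∑' i : ℕ, ((2:ℝ)^(i + k + 1))⁻¹ = ((2:ℝ)^k)⁻¹ := by
    have he : ∀ i : ℕ, ((2:ℝ)^(i + k + 1))⁻¹ = ((2:ℝ)^(k+1))⁻¹ * (1/2)^i := by
      intro i
      rw [one_div, inv_pow, ← mul_inv, ← pow_add]
      congr 1
      ring
    rw [tsum_congr he, tsum_mul_left, tsum_geometric_two, pow_succ]
    rw [mul_inv]
    field_simp
  linarith

lemma tail_pos (d : ℕ → Bool) (k : ℕ) (h : ∃ j, k ≤ j ∧ d j = true) :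
    0 < ∑' i, serf d (i + k) := by
  obtain ⟨j, hkj, hdj⟩ := h
  have hsum : Summable (fun i => serf d (i + k)) :=
    (serf_summable d).comp_injective (add_left_injective k)
  have h1 : serf d ((j - k) + k) ≤ ∑' i, serf d (i + k) :=
    Summable.le_tsum hsum _ (fun i _ => serf_nonneg d _)
  have h2 : 0 < serf d ((j - k) + k) := by
    rw [show j - k + k = j by omega]
    unfold serf
    rw [hdj, if_pos rfl]
    positivity
  linarith

lemma partial_sum (d : ℕ → Bool) (n : ℕ) :
    2^(n+1) * (∑ i ∈ Finset.range (n+1), serf d i) = ((Nacc d n : ℤ) : ℝ) := by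
  induction n with
  | zero =>
    by_cases hd : d 0 = true
    · simp [Nacc, serf, hd]
    · simp [Nacc, serf, hd]
  | succ n ih =>
    rw [Finset.sum_range_succ, mul_add]
    have e1 : (2:ℝ)^(n+1+1) * (∑ i ∈ Finset.range (n+1), serf d i)
        = 2 * ((Nacc d n : ℤ):ℝ) := by
      rw [show (2:ℝ)^(n+1+1) = 2 * 2^(n+1) by ring, mul_assoc, ih]
    have e2 : (2:ℝ)^(n+1+1) * serf d (n+1) = (if d (n+1) then (1:ℝ) else 0) := by
      unfold serf
      split_ifs
      · rw [mul_inv_cancel₀ (by positivity)]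
      · ring
    rw [e1, e2, show Nacc d (n+1) = 2 * Nacc d n + (if d (n+1) then 1 else 0) from rfl]
    push_cast
    split_ifs <;> ring

lemma ser_c (d : ℕ → Bool) (H : ∀ k, ∃ j, k ≤ j ∧ d j = true) (n : ℕ) :
    c (n+1) (ser d) = Nacc d n + 1 := by
  have hsplit := Summable.sum_add_tsum_nat_add (f := serf d) (n+1) (serf_summable d)
  set T := ∑' i, serf d (i + (n+1)) with hT
  have hTpos : 0 < T := tail_pos d (n+1) (H (n+1))
  have hTle : T ≤ ((2:ℝ)^(n+1))⁻¹ := tail_le d (n+1)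
  rw [c_eq_iff]
  have hs : ser d = (∑ i ∈ Finset.range (n+1), serf d i) + T := by
    rw [ser, ← hsplit]
  have hps := partial_sum d n
  have hpow : (0:ℝ) < 2^(n+1) := by positivity
  constructor
  · push_cast
    rw [hs, mul_add, hps]
    nlinarith
  · push_cast
    rw [hs, mul_add, hps]
    have : 2^(n+1) * T ≤ 1 := by
      rw [← mul_inv_cancel₀ (ne_of_gt hpow)]
      exact mul_le_mul_of_nonneg_left hTle (le_of_lt hpow)
    linarith

lemma ser_mem (d : ℕ → Bool) (H : ∀ k, ∃ j, k ≤ j ∧ d j = true) :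
    0 < ser d ∧ ser d ≤ 1 := by
  have hsplit := Summable.sum_add_tsum_nat_add (f := serf d) 0 (serf_summable d)
  have h0 : ser d = ∑' i, serf d (i + 0) := by
    rw [ser, ← hsplit]; simp
  constructor
  · rw [h0]; exact tail_pos d 0 (H 0)
  · rw [h0]
    have := tail_le d 0
    simpa using this

lemma Nacc_parity (d : ℕ → Bool) (n : ℕ) :
    Nacc d n % 2 = (if d n then 1 else 0) := by
  cases n with
  | zero => unfold Nacc; split <;> rfl
  | succ n => unfold Nacc; split <;> omega

lemma ser_gray_zero (d : ℕ → Bool) (H : ∀ k, ∃ j, k ≤ j ∧ d j = true) :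
    (gray 0 (ser d) ↔ d 0 = true) := by
  have hm := ser_mem d H
  unfold gray
  rw [c_zero hm.1 hm.2, ser_c d H 0]
  have h0 := Nacc_parity d 0
  cases hd : d 0 <;> rw [hd] at h0 <;> norm_num at h0 ⊢ <;> omega

lemma ser_gray_succ (d : ℕ → Bool) (H : ∀ k, ∃ j, k ≤ j ∧ d j = true) (n : ℕ) :
    (gray (n+1) (ser d) ↔ d (n+1) ≠ d n) := by
  unfold gray
  rw [ser_c d H n, ser_c d H (n+1)]
  have h1 := Nacc_parity d n
  have h2 := Nacc_parity d (n+1)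
  have h3 : Nacc d (n+1) = 2 * Nacc d n + (if d (n+1) then 1 else 0) := rfl
  cases hdn : d n <;> cases hdn1 : d (n+1) <;> rw [hdn] at h1 <;> rw [hdn1] at h2 h3 <;>
    norm_num at h1 h2 h3 ⊢ <;> omega


/-! ### The pattern map -/

open Classical in
noncomputable def pat (x : ℝ) : Set ℕ :=
  if h : ∃ w : List Bool, val w = x then
    {n | (toPat (h.choose)).getD n false = true}
  else {n | gray n x}

lemma pat_val (w : List Bool) : pat (val w) = {n | (toPat w).getD n false = true} := by
  have h : ∃ w', val w' = val w := ⟨w, rfl⟩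
  rw [pat]
  rw [dif_pos h, val_inj _ _ h.choose_spec]

lemma pat_generic {x : ℝ} (h : ¬ ∃ w, val w = x) : pat x = {n | gray n x} := by
  rw [pat]
  rw [dif_neg h]

lemma c_zero_pt (k : ℕ) : c k 0 = 0 := by
  unfold c; rw [mul_zero, Int.ceil_zero]

lemma c_one (k : ℕ) : c k 1 = 2^k := by
  unfold c
  rw [mul_one, show ((2:ℝ)^k) = ((2^k : ℤ) : ℝ) by push_cast; ring, Int.ceil_intCast]

lemma not_val_zero : ¬ ∃ w, val w = (0:ℝ) := by
  rintro ⟨w, hw⟩; have := (val_mem w).1; rw [hw] at this; exact lt_irrefl _ this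

lemma not_val_one : ¬ ∃ w, val w = (1:ℝ) := by
  rintro ⟨w, hw⟩; have := (val_mem w).2; rw [hw] at this; exact lt_irrefl _ this

lemma pat_zero : pat 0 = ∅ := by
  rw [pat_generic not_val_zero]
  ext n
  simp only [Set.mem_setOf_eq, Set.mem_empty_iff_false, iff_false]
  unfold gray
  rw [c_zero_pt, c_zero_pt]
  simp

lemma pat_one : pat 1 = {0} := by
  rw [pat_generic not_val_one]
  ext n
  simp only [Set.mem_setOf_eq, Set.mem_singleton_iff]
  unfold gray
  rw [c_one, c_one]
  cases n with
  | zero => simp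
  | succ n =>
    have h1 := two_pow_emod n
    have h2 := two_pow_emod (n+1)
    simp only [iff_false, ne_eq, not_not]
    constructor
    · intro h; omega
    · intro h; omega

lemma val_grid_high (w : List Bool) {k : ℕ} (hk : w.length + 1 ≤ k) :
    grid k (val w) := by
  obtain ⟨s, -, hs⟩ := (val_ngrid w).2
  refine ⟨2^(k - (w.length+1)) * s, ?_⟩
  push_cast
  rw [hs, ← mul_assoc, ← pow_add]
  congr 2
  omega

lemma pat_bit_of_ngrid {y : ℝ} {n : ℕ} (hng : ¬ grid (n+1) y) :
    (n ∈ pat y ↔ gray n y) := by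
  by_cases hv : ∃ w, val w = y
  · obtain ⟨w, rfl⟩ := hv
    rw [pat_val]
    have hn : n < w.length := by
      by_contra h
      push_neg at h
      exact hng (val_grid_high w (by omega))
    simp only [Set.mem_setOf_eq]
    rw [toPat_bit_low hn, ← gray_val w n hn]
  · rw [pat_generic hv]; rfl

/-- Interior case neighborhood. -/
lemma interior_nbhd {x : ℝ} {n : ℕ} (hg : gray n x) (hng : ¬ grid (n+1) x) :
    ∃ δ > 0, ∀ y : ℝ, |y - x| < δ → n ∈ pat y := by
  set C := c (n+1) x with hC
  have hpow : (0:ℝ) < 2^(n+1) := by positivity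
  have h1 : (C:ℝ) - 1 < 2^(n+1) * x := c_sand_left _ _
  have h2 : 2^(n+1) * x < C := by
    rcases lt_or_eq_of_le (c_sand_right (n+1) x) with h | h
    · exact h
    · exact absurd ⟨C, h.symm⟩ hng
  refine ⟨min (x - ((C:ℝ)-1)/2^(n+1)) ((C:ℝ)/2^(n+1) - x), ?_, ?_⟩
  · apply lt_min
    · rw [sub_pos, div_lt_iff₀ hpow]; linarith
    · rw [sub_pos, lt_div_iff₀ hpow]; linarith
  · intro y hyd
    rw [abs_lt] at hyd
    have hd1 : y - x < (C:ℝ)/2^(n+1) - x := lt_of_lt_of_le hyd.2 (min_le_right _ _)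
    have hd2 : -(y - x) < x - ((C:ℝ)-1)/2^(n+1) := by
      have h5 := neg_lt_neg hyd.1
      rw [neg_neg] at h5
      exact lt_of_lt_of_le h5 (min_le_left _ _)
    have hy1 : (C:ℝ) - 1 < 2^(n+1) * y := by
      have h6 : ((C:ℝ)-1)/2^(n+1) < y := by linarith
      rw [div_lt_iff₀ hpow] at h6; linarith
    have hy2 : 2^(n+1) * y < C := by
      have h7 : y < (C:ℝ)/2^(n+1) := by linarith
      rw [lt_div_iff₀ hpow] at h7; linarith
    have hcy : c (n+1) y = C := c_eq_iff.mpr ⟨hy1, le_of_lt hy2⟩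
    have hcx : c (n+1) y = c (n+1) x := hcy
    have hcny : c n y = c n x := c_determined hcx
    have hgy : gray n y := by unfold gray at hg ⊢; rw [hcx, hcny]; exact hg
    have hngy : ¬ grid (n+1) y := by
      rintro ⟨t, ht⟩
      rw [← ht] at hy1 hy2
      have e1 : C - 1 < t := by exact_mod_cast hy1
      have e2 : t < C := by exact_mod_cast hy2
      omega
    exact (pat_bit_of_ngrid hngy).mpr hgy

/-- Flagged dyadic neighborhood. -/
lemma flag_nbhd {w : List Bool} (hf : flagw w = true) :
    ∃ δ > 0, ∀ y : ℝ, |y - val w| < δ → (w.length + 1) ∈ pat y := by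
  obtain ⟨s, hsodd, hs⟩ := (val_ngrid w).2
  set m := w.length with hm
  set n := m + 1 with hn
  have hpow : (0:ℝ) < 2^(n+1) := by positivity
  have hpow2 : (2:ℝ)^(n+1) = 2 * 2^(m+1) := by rw [hn]; ring
  have h2s : (2*s : ℝ) = 2^(n+1) * val w := by rw [hpow2]; push_cast; rw [hs]; ring
  refine ⟨((2:ℝ)^(n+1))⁻¹, by positivity, ?_⟩
  intro y hyd
  rw [abs_lt] at hyd
  rcases lt_trichotomy y (val w) with hlt | heq | hgt
  · -- left side: c (n+1) y = 2s, c n y = s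
    have hy1 : (2*s:ℝ) - 1 < 2^(n+1) * y := by
      have : val w - ((2:ℝ)^(n+1))⁻¹ < y := by linarith
      have h3 : 2^(n+1) * (val w - ((2:ℝ)^(n+1))⁻¹) < 2^(n+1) * y :=
        mul_lt_mul_of_pos_left this hpow
      rw [mul_sub, mul_inv_cancel₀ (ne_of_gt hpow), ← h2s] at h3
      linarith
    have hy2 : 2^(n+1) * y < (2*s:ℝ) := by
      have h3 : 2^(n+1) * y < 2^(n+1) * val w := mul_lt_mul_of_pos_left hlt hpow
      rw [← h2s] at h3; exact h3
    have hcy : c (n+1) y = 2*s := by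
      rw [c_eq_iff]; push_cast; exact ⟨by push_cast at hy1; linarith, by linarith⟩
    have hcny : c n y = s := by
      rw [c_eq_iff]
      have e : (2:ℝ)^(n+1) = 2 * 2^n := by ring
      rw [e] at hy1 hy2
      constructor
      · push_cast; nlinarith
      · nlinarith
    have hgy : gray n y := by
      unfold gray; rw [hcy, hcny]; rcases hsodd with ⟨j, hj⟩; omega
    have hngy : ¬ grid (n+1) y := by
      rintro ⟨t, ht⟩
      rw [← ht] at hy1 hy2
      have e1 : 2*s - 1 < t := by exact_mod_cast hy1
      have e2 : t < 2*s := by exact_mod_cast hy2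
      omega
    exact (pat_bit_of_ngrid hngy).mpr hgy
  · rw [heq, pat_val]
    simp only [Set.mem_setOf_eq]
    rw [(toPat_bit_high (by omega)).mpr ⟨hf, rfl⟩]
  · -- right side: c (n+1) y = 2s+1, c n y = s+1
    have hy1 : (2*s:ℝ) < 2^(n+1) * y := by
      have h3 : 2^(n+1) * val w < 2^(n+1) * y := mul_lt_mul_of_pos_left hgt hpow
      rw [← h2s] at h3; exact h3
    have hy2 : 2^(n+1) * y < (2*s:ℝ) + 1 := by
      have : y < val w + ((2:ℝ)^(n+1))⁻¹ := by linarith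
      have h3 : 2^(n+1) * y < 2^(n+1) * (val w + ((2:ℝ)^(n+1))⁻¹) :=
        mul_lt_mul_of_pos_left this hpow
      rw [mul_add, mul_inv_cancel₀ (ne_of_gt hpow), ← h2s] at h3
      linarith
    have hcy : c (n+1) y = 2*s + 1 := by
      rw [c_eq_iff]; push_cast; exact ⟨by linarith, by linarith⟩
    have hcny : c n y = s + 1 := by
      rw [c_eq_iff]
      have e : (2:ℝ)^(n+1) = 2 * 2^n := by ring
      rw [e] at hy1 hy2
      constructor
      · push_cast; nlinarith
      · push_cast; nlinarith
    have hgy : gray n y := by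
      unfold gray; rw [hcy, hcny]; rcases hsodd with ⟨j, hj⟩; omega
    have hngy : ¬ grid (n+1) y := by
      rintro ⟨t, ht⟩
      rw [← ht] at hy1 hy2
      have e1 : 2*s < t := by exact_mod_cast hy1
      have e2 : t < 2*s + 1 := by exact_mod_cast hy2
      omega
    exact (pat_bit_of_ngrid hngy).mpr hgy

/-- Neighborhood at 1 (coordinate 0). -/
lemma one_nbhd : ∀ y : ℝ, 0 ≤ y → y ≤ 1 → |y - 1| < 1/2 → 0 ∈ pat y := by
  intro y hy0 hy1 hyd
  rw [abs_lt] at hyd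
  have hhalf : 1/2 < y := by linarith
  rcases lt_or_eq_of_le hy1 with hlt | heq
  · have hgy : gray 0 y := by
      unfold gray
      rw [c_zero (by linarith) hy1]
      have : c 1 y = 2 := by
        rw [c_eq_iff]
        constructor
        · push_cast; norm_num; linarith
        · push_cast; norm_num; linarith
      rw [this]
      simp
    have hngy : ¬ grid 1 y := by
      rintro ⟨t, ht⟩
      have e1 : (1:ℝ) < t := by rw [ht]; norm_num; linarith
      have e2 : (t:ℝ) < 2 := by rw [ht]; norm_num; linarith
      have e1' : 1 < t := by exact_mod_cast e1
      have e2' : t < 2 := by exact_mod_cast e2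
      omega
    exact (pat_bit_of_ngrid hngy).mpr hgy
  · rw [heq, pat_one]; rfl

/-- the section at coordinate n is open in the subtype. -/
lemma sec_open (n : ℕ) : IsOpen {x : (Set.Icc (0:ℝ) 1) | n ∈ pat (x:ℝ)} := by
  rw [Metric.isOpen_iff]
  intro x hx
  simp only [Set.mem_setOf_eq] at hx
  have key : ∃ δ > 0, ∀ y : ℝ, 0 ≤ y → y ≤ 1 → |y - (x:ℝ)| < δ → n ∈ pat y := by
    by_cases hng : grid (n+1) (x:ℝ)
    · by_cases hv : ∃ w, val w = (x:ℝ)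
      · obtain ⟨w, hw⟩ := hv
        rw [← hw] at hx
        rw [pat_val] at hx
        simp only [Set.mem_setOf_eq] at hx
        have hn : w.length ≤ n := by
          by_contra h
          push_neg at h
          rw [← hw] at hng
          exact (val_ngrid w).1 (n+1) (by omega) hng
        obtain ⟨hf, hn1⟩ := (toPat_bit_high hn).mp hx
        obtain ⟨δ, hδ, hball⟩ := flag_nbhd hf
        exact ⟨δ, hδ, fun y _ _ hyd => by
          rw [hn1]; exact hball y (by rw [hw]; exact hyd)⟩
      · -- generic grid point: 0 or 1
        rcases eq_or_lt_of_le x.2.1 with h0 | h0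
        · exfalso
          have hx0 : (x:ℝ) = 0 := h0.symm
          rw [hx0, pat_zero] at hx
          exact hx
        · rcases lt_or_eq_of_le x.2.2 with h1 | h1
          · exfalso
            obtain ⟨t, ht⟩ := hng
            obtain ⟨w, hw⟩ := val_surj (n+1) t (x:ℝ)
              (by rw [ht]; field_simp) h0 h1
            exact hv ⟨w, hw⟩
          · -- x = 1
            have hx1 : (x:ℝ) = 1 := h1
            have hn0 : n = 0 := by
              rw [hx1, pat_one] at hx
              exact hx
            refine ⟨1/2, by norm_num, ?_⟩
            intro y hy0 hy1 hyd
            rw [hn0]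
            exact one_nbhd y hy0 hy1 (by rw [hx1] at hyd; exact hyd)
    · have hg : gray n (x:ℝ) := (pat_bit_of_ngrid hng).mp hx
      obtain ⟨δ, hδ, hball⟩ := interior_nbhd hg hng
      exact ⟨δ, hδ, fun y _ _ hyd => hball y hyd⟩
  obtain ⟨δ, hδ, hball⟩ := key
  refine ⟨δ, hδ, ?_⟩
  intro y hy
  simp only [Metric.mem_ball] at hy
  rw [Subtype.dist_eq, Real.dist_eq] at hy
  exact hball (y:ℝ) y.2.1 y.2.2 hy


/-! ### classification of points with finite pattern -/

lemma finite_gray_eq_one {x : ℝ} (h0 : 0 < x) (hx1 : x ≤ 1) (hgen : ¬ ∃ w, val w = x)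
    {K : ℕ} (hK : ∀ n, K ≤ n → ¬ gray n x) : x = 1 := by
  have hpar : ∀ n, K ≤ n → c (n+1) x % 2 = c n x % 2 := by
    intro n hn
    have := hK n hn
    unfold gray at this
    omega
  have hpowK : (0:ℝ) < 2^K := by positivity
  rcases Int.even_or_odd (c K x) with he | ho
  · -- even case: x = c K x / 2^K
    have hval : ∀ j, c (K+j) x = 2^j * c K x := by
      intro j
      induction j with
      | zero => simp
      | succ j ih =>
        have h1 := c_succ_branch (K+j) x
        have h2 := hpar (K+j) (by omega)
        have heven : c (K+j) x % 2 = 0 := by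
          rw [ih]
          rcases he with ⟨r, hr⟩
          have h8 : (2:ℤ)^j * c K x = 2 * (2^j * r) := by rw [hr]; ring
          omega
        have : c (K+j+1) x = 2 * c (K+j) x := by omega
        rw [show K + (j+1) = (K+j)+1 by omega, this, ih]
        ring
    have hxv : x = (c K x : ℝ)/2^K := by
      apply le_antisymm
      · have := c_sand_right K x
        rw [le_div_iff₀ hpowK]
        linarith
      · by_contra hlt
        push_neg at hlt
        set ε := ((c K x : ℝ))/2^K - x with hε
        have hεpos : 0 < ε := by rw [hε]; linarith
        obtain ⟨j, hj⟩ := pow_unbounded_of_one_lt (2^K/ε) (by norm_num : (1:ℝ) < 2)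
        have h3 := c_sand_left (K+j) x
        rw [hval j] at h3
        push_cast at h3
        rw [pow_add] at h3
        have hpj : (0:ℝ) < 2^j := by positivity
        have hvk : (2:ℝ)^K * ε = (c K x : ℝ) - 2^K * x := by
          rw [hε]; field_simp
        have h4 : ε * (2^K * 2^j) < 1 := by nlinarith
        rw [div_lt_iff₀ hεpos] at hj
        have h5 : (1:ℝ) ≤ 2^K := by
          simpa using pow_le_pow_right₀ (by norm_num : (1:ℝ) ≤ 2) (Nat.zero_le K)
        nlinarith [mul_lt_mul_of_pos_right hj hpowK]
    rcases lt_or_eq_of_le hx1 with hlt | heq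
    · exact absurd (val_surj K (c K x) x hxv h0 hlt) hgen
    · exact heq
  · -- odd case: impossible
    exfalso
    have hval : ∀ j, c (K+j) x = 2^j * (c K x - 1) + 1 := by
      intro j
      induction j with
      | zero => simp
      | succ j ih =>
        have h1 := c_succ_branch (K+j) x
        have h2 := hpar (K+j) (by omega)
        have hodd : c (K+j) x % 2 = 1 := by
          rw [ih]
          rcases ho with ⟨r, hr⟩
          have h8 : (2:ℤ)^j * (c K x - 1) = 2 * (2^j * r) := by rw [hr]; ring
          omega
        have : c (K+j+1) x = 2 * c (K+j) x - 1 := by omega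
        rw [show K + (j+1) = (K+j)+1 by omega, this, ih]
        ring
    set v := ((c K x : ℝ) - 1)/2^K with hv
    have hgt : v < x := by
      have := c_sand_left K x
      rw [hv, div_lt_iff₀ hpowK]
      linarith
    set ε := x - v with hε
    have hεpos : 0 < ε := by rw [hε]; linarith
    obtain ⟨j, hj⟩ := pow_unbounded_of_one_lt (2^K/ε) (by norm_num : (1:ℝ) < 2)
    have h3 := c_sand_right (K+j) x
    rw [hval j] at h3
    push_cast at h3
    rw [pow_add] at h3
    have hpj : (0:ℝ) < 2^j := by positivity
    have hvk : (2:ℝ)^K * v = (c K x : ℝ) - 1 := by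
      rw [hv]; field_simp
    have h4 : ε * (2^K * 2^j) ≤ 1 := by
      rw [hε]; nlinarith
    rw [div_lt_iff₀ hεpos] at hj
    have h5 : (1:ℝ) ≤ 2^K := by
      simpa using pow_le_pow_right₀ (by norm_num : (1:ℝ) ≤ 2) (Nat.zero_le K)
    nlinarith [mul_lt_mul_of_pos_right hj hpowK]

lemma flagw_nil : flagw [] = true := by
  unfold flagw
  rw [List.reverse_nil, strip_nil]

lemma flagw_single_true : flagw [true] = true := by
  unfold flagw
  rw [show [true].reverse = [true] from rfl, strip_single]

lemma toPat_ne_nil (w : List Bool) : toPat w ≠ [] := by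
  unfold toPat
  split_ifs with hf
  · simp
  · intro h
    subst h
    rw [flagw_nil] at hf
    exact hf rfl

lemma toPat_ne_single (w : List Bool) : toPat w ≠ [true] := by
  unfold toPat
  split_ifs with hf
  · intro h
    have := congrArg List.length h
    simp at this
  · intro h
    subst h
    rw [flagw_single_true] at hf
    exact hf rfl

lemma pat_val_finite (w : List Bool) : (pat (val w)).Finite := by
  apply Set.Finite.subset (Set.finite_Iio ((toPat w).length))
  intro n hn
  rw [pat_val] at hn
  simp only [Set.mem_setOf_eq] at hn
  simp only [Set.mem_Iio]
  by_contra h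
  push_neg at h
  rw [List.getD_eq_default _ _ h] at hn
  exact absurd hn (by simp)

lemma pat_val_nonempty (w : List Bool) : ((toPat w).length - 1) ∈ pat (val w) := by
  rw [pat_val]
  simp only [Set.mem_setOf_eq]
  rw [getD_last (toPat_ne_nil w)]
  exact toPat_last w

lemma classify {x : ℝ} (h0 : 0 ≤ x) (h1 : x ≤ 1) (hfin : (pat x).Finite) :
    x = 0 ∨ x = 1 ∨ ∃ w, val w = x := by
  by_cases hv : ∃ w, val w = x
  · exact Or.inr (Or.inr hv)
  · rcases eq_or_lt_of_le h0 with h | h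
    · exact Or.inl h.symm
    · refine Or.inr (Or.inl ?_)
      rw [pat_generic hv] at hfin
      obtain ⟨K, hK⟩ := hfin.bddAbove
      apply finite_gray_eq_one h h1 hv (K := K+1)
      intro n hn hg
      have : n ≤ K := hK (Set.mem_setOf_eq ▸ hg)
      omega

lemma pat_inj {x y : ℝ} (hx0 : 0 ≤ x) (hx1 : x ≤ 1) (hy0 : 0 ≤ y) (hy1 : y ≤ 1)
    (h : pat x = pat y) : x = y := by
  by_cases hfin : (pat x).Finite
  · have hfy : (pat y).Finite := h ▸ hfin
    have hvone : ∀ w : List Bool, pat 1 ≠ pat (val w) := by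
      intro w hcontra
      rw [pat_one, pat_val] at hcontra
      have hb : ∀ n, (toPat w).getD n false = [true].getD n false := by
        intro n
        have hiff : ((toPat w).getD n false = true ↔ n = 0) := by
          have h9 := Set.ext_iff.mp hcontra n
          simp only [Set.mem_singleton_iff, Set.mem_setOf_eq] at h9
          exact h9.symm
        match n with
        | 0 => cases hh : (toPat w).getD 0 false
               · exfalso; have := hiff.mpr rfl; rw [hh] at this; exact absurd this (by simp)
               · rfl
        | n+1 => cases hh : (toPat w).getD (n+1) false
                 · rfl
                 · exfalso; have := hiff.mp hh; omega
      exact toPat_ne_single w (canon_ext (toPat_last w) (by rfl) hb)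
    have hvzero : ∀ w : List Bool, pat 0 ≠ pat (val w) := by
      intro w hcontra
      have := pat_val_nonempty w
      rw [← hcontra, pat_zero] at this
      exact this
    rcases classify hx0 hx1 hfin with rfl | rfl | ⟨w, rfl⟩ <;>
      rcases classify hy0 hy1 hfy with rfl | rfl | ⟨w', rfl⟩
    · rfl
    · exfalso; rw [pat_zero, pat_one] at h
      have : (0:ℕ) ∈ (∅ : Set ℕ) := by rw [h]; rfl
      exact this
    · exact absurd h (hvzero w')
    · exfalso; rw [pat_zero, pat_one] at h
      have : (0:ℕ) ∈ (∅ : Set ℕ) := by rw [← h]; rfl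
      exact this
    · rfl
    · exact absurd h (hvone w')
    · exact absurd h.symm (hvzero w)
    · exact absurd h.symm (hvone w)
    · -- both dyadic
      rw [pat_val, pat_val] at h
      have hb : ∀ n, (toPat w).getD n false = (toPat w').getD n false := by
        intro n
        have hiff := Set.ext_iff.mp h n
        simp only [Set.mem_setOf_eq] at hiff
        cases hh : (toPat w).getD n false
        · cases hh' : (toPat w').getD n false
          · rfl
          · exfalso; have := hiff.mpr hh'; rw [hh] at this; exact absurd this (by simp)
        · rw [hiff.mp hh]
      rw [toPat_inj (canon_ext (toPat_last w) (toPat_last w') hb)]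
  · have hfy : ¬ (pat y).Finite := h ▸ hfin
    have hvx : ¬ ∃ w, val w = x := by
      rintro ⟨w, rfl⟩; exact hfin (pat_val_finite w)
    have hvy : ¬ ∃ w, val w = y := by
      rintro ⟨w, rfl⟩; exact hfy (pat_val_finite w)
    have hx0' : x ≠ 0 := by
      rintro rfl; rw [pat_zero] at hfin; exact hfin Set.finite_empty
    have hy0' : y ≠ 0 := by
      rintro rfl; rw [pat_zero] at hfy; exact hfy Set.finite_empty
    rw [pat_generic hvx, pat_generic hvy] at h
    exact eq_of_gray_eq (lt_of_le_of_ne hx0 (Ne.symm hx0')) hx1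
      (lt_of_le_of_ne hy0 (Ne.symm hy0')) hy1
      (fun n => by
        have := Set.ext_iff.mp h n
        simpa using this)

/-! ### existence -/

lemma exists_pat (S : Set ℕ) : ∃ x : ℝ, 0 ≤ x ∧ x ≤ 1 ∧ pat x = S := by
  classical
  by_cases hfin : S.Finite
  · by_cases hS0 : S = ∅
    · exact ⟨0, le_refl 0, by norm_num, by rw [pat_zero, hS0]⟩
    · by_cases hS1 : S = {0}
      · exact ⟨1, by norm_num, le_refl 1, by rw [pat_one, hS1]⟩
      · have hne : hfin.toFinset.Nonempty := by
          rw [Set.Finite.toFinset_nonempty]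
          exact Set.nonempty_iff_ne_empty.mpr hS0
        set L := hfin.toFinset.max' hne with hL
        have hLmem : L ∈ S := by
          have := hfin.toFinset.max'_mem hne
          rwa [Set.Finite.mem_toFinset] at this
        have hLmax : ∀ n ∈ S, n ≤ L := fun n hn =>
          hfin.toFinset.le_max' n (hfin.mem_toFinset.mpr hn)
        set v : List Bool := (List.range (L+1)).map (fun i => decide (i ∈ S)) with hv
        have hvlen : v.length = L + 1 := by simp [hv]
        have hvbit : ∀ n, (v.getD n false = true ↔ n ∈ S) := by
          intro n
          by_cases hn : n < L + 1
          · rw [List.getD_eq_getElem _ _ (by rw [hvlen]; exact hn)]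
            simp [hv]
          · rw [List.getD_eq_default _ _ (by omega)]
            constructor
            · intro hcon; exact absurd hcon (by simp)
            · intro hcon; exfalso; have := hLmax n hcon; omega
        have hvne' : v ≠ [] := by
          intro hcon
          rw [hcon] at hvlen
          simp at hvlen
        have hvlast : v.reverse.headD false = true := by
          rw [← getD_last hvne', hvlen]
          simpa using (hvbit L).mpr hLmem
        have hvne : v ≠ [true] := by
          intro hcon
          apply hS1
          ext n
          rw [← hvbit n, hcon]
          match n with
          | 0 => simp
          | n+1 => simp
        obtain ⟨w, hw⟩ := toPat_surj hvlast hvne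
        refine ⟨val w, le_of_lt (val_mem w).1, le_of_lt (val_mem w).2, ?_⟩
        rw [pat_val, hw]
        ext n
        exact hvbit n
  · -- infinite case
    set cnt : ℕ → ℕ := fun n => ((Finset.range (n+1)).filter (· ∈ S)).card with hcnt
    set d : ℕ → Bool := fun n => decide (cnt n % 2 = 1) with hd
    have hstep : ∀ n, cnt (n+1) = cnt n + (if (n+1) ∈ S then 1 else 0) := by
      intro n
      rw [hcnt]
      simp only
      rw [Finset.range_add_one, Finset.filter_insert]
      split_ifs with hmem
      · rw [Finset.card_insert_of_notMem (by simp)]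
      · rfl
    have hd0 : (d 0 = true ↔ 0 ∈ S) := by
      rw [hd]
      simp only [decide_eq_true_eq]
      have : cnt 0 = if 0 ∈ S then 1 else 0 := by
        rw [hcnt]
        simp only
        rw [show Finset.range 1 = {0} from rfl, Finset.filter_singleton]
        split_ifs <;> simp
      rw [this]
      split_ifs with hmem
      · simp [hmem]
      · simp [hmem]
    have hdsucc : ∀ n, (d (n+1) ≠ d n ↔ (n+1) ∈ S) := by
      intro n
      rw [hd]
      simp only [ne_eq, decide_eq_decide]
      have := hstep n
      split_ifs at this with hmem
      · simp only [hmem, iff_true]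
        omega
      · simp only [hmem, iff_false, not_not]
        omega
    have hSinf : S.Infinite := hfin
    have hinf : ∀ k, ∃ j, k ≤ j ∧ d j = true := by
      intro k
      obtain ⟨a, haS, hak⟩ := hSinf.exists_gt k
      have ha1 : ∃ m, a = m + 1 := ⟨a - 1, by omega⟩
      obtain ⟨m, rfl⟩ := ha1
      by_cases hdm : d m = true
      · exact ⟨m, by omega, hdm⟩
      · refine ⟨m+1, by omega, ?_⟩
        have := (hdsucc m).mpr haS
        cases h1 : d (m+1)
        · cases h2 : d m
          · rw [h1, h2] at this; exact absurd rfl this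
          · exact absurd h2 hdm
        · rfl
    refine ⟨ser d, le_of_lt (ser_mem d hinf).1, (ser_mem d hinf).2, ?_⟩
    have hgen : ¬ ∃ w, val w = ser d := by
      rintro ⟨w, hw⟩
      obtain ⟨a, haS, hak⟩ := hSinf.exists_gt (w.length + 2)
      have ha1 : ∃ m, a = m + 1 := ⟨a - 1, by omega⟩
      obtain ⟨m, rfl⟩ := ha1
      have hgray : gray (m+1) (ser d) :=
        (ser_gray_succ d hinf m).mpr ((hdsucc m).mpr haS)
      rw [← hw] at hgray
      exact gray_val_high w (m+1) (by omega) hgray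
    rw [pat_generic hgen]
    ext n
    simp only [Set.mem_setOf_eq]
    match n with
    | 0 => rw [ser_gray_zero d hinf]; exact hd0
    | n+1 =>
      rw [ser_gray_succ d hinf n]
      exact hdsucc n

end UU

theorem uu_open_unitInterval_nat :
    ∃ U : Set ((Set.Icc (0:ℝ) 1) × ℕ), IsOpen U ∧
      ∀ S : Set ℕ, ∃! x : Set.Icc (0:ℝ) 1, {n : ℕ | (x, n) ∈ U} = S := by
  refine ⟨{p | p.2 ∈ UU.pat (p.1 : ℝ)}, ?_, ?_⟩
  · have hU : {p : (Set.Icc (0:ℝ) 1) × ℕ | p.2 ∈ UU.pat (p.1:ℝ)} =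
        ⋃ n, ({x : (Set.Icc (0:ℝ) 1) | n ∈ UU.pat (x:ℝ)} ×ˢ ({n} : Set ℕ)) := by
      ext ⟨x, k⟩
      simp only [Set.mem_setOf_eq, Set.mem_iUnion, Set.mem_prod, Set.mem_singleton_iff]
      constructor
      · intro h; exact ⟨k, h, rfl⟩
      · rintro ⟨n, hn, rfl⟩; exact hn
    rw [hU]
    exact isOpen_iUnion fun n => (UU.sec_open n).prod (isOpen_discrete _)
  · intro S
    obtain ⟨x, hx0, hx1, hx⟩ := UU.exists_pat S
    refine ⟨⟨x, hx0, hx1⟩, ?_, ?_⟩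
    · show {n | n ∈ UU.pat x} = S
      rw [Set.setOf_mem_eq]
      exact hx
    · rintro ⟨y, hy0, hy1⟩ hy
      have hy' : UU.pat y = S := by
        rw [← hy]
        exact Set.setOf_mem_eq.symm
      apply Subtype.ext
      exact UU.pat_inj hy0 hy1 hx0 hx1 (hy'.trans hx.symm)
end

section
/- There exists a closed set V contained in the open interval (-1,1) × ℕ, closed as a subset of the product space (-1,1) × ℕ (with (-1,1) carrying the subspace topology from ℝ and ℕ discrete), such that for every subset S ⊆ ℕ there is exactly one point x ∈ (-1,1) with horizontal section V(x) = {n ∈ ℕ : (x,n) ∈ V} equal to S. -/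
/-!
Split a nondegenerate interval into its midpoint and countably many subintervals, its children
indexed by `ℕ`, which accumulate only at the midpoint and at excluded endpoints; iterating gives
a cell for every path `p : List ℕ`. A path `[k₀, k₁, …]` encodes the set `{k₀, k₀ + 1 + k₁, …}`,
and `n` belongs to the section of `x` iff `x` lies in a cell whose path encodes a set with
largest element `n`. The midpoint of the cell of `p` has the set of `p` as its section; a point
in an infinite nested chain of cells has the infinite set encoded by the chain, and is the only
such point since the cells halve at every step. Every point is of exactly one of these two
kinds, so sections biject with `Set ℕ`.

The column over `n`, the set of points whose section contains `n`, is thus a finite union of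
cells. It is closed because an endpoint that a child excludes is a closed endpoint of an earlier
sibling, and this endpoint stays in a chain of descendants encoding every larger number (a right
end, kept by child `0`) or every larger number of the same parity (a left end, kept by child
`1`). Siblings meeting at a left end have indices of equal parity because even children lie to
the right of the midpoint and odd ones to the left.
-/

open Set Filter Topology Function

noncomputable section

namespace UniquelyUniversal

theorem exists_and_not_succ {p : ℕ → Prop} (h0 : p 0) (h : ∃ m, ¬p m) :
    ∃ m, p m ∧ ¬p (m + 1) := by
  by_contra! H
  obtain ⟨m, hm⟩ := h
  induction m with
  | zero => exact hm h0
  | succ m ih => exact ih fun hpm => hm (H m hpm)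

theorem exists_div_two_pow_lt (a : ℝ) {ε : ℝ} (hε : 0 < ε) :
    ∃ m : ℕ, a / 2 ^ m < ε := by
  have h : Tendsto (fun m : ℕ => a * (1 / 2) ^ m) atTop (𝓝 (a * 0)) :=
    (tendsto_pow_atTop_nhds_zero_of_lt_one (by norm_num) (by norm_num)).const_mul a
  rw [mul_zero] at h
  obtain ⟨m, hm⟩ := (h.eventually (gt_mem_nhds hε)).exists
  exact ⟨m, by simpa [div_eq_mul_inv] using hm⟩

structure Cell where
  lo : ℝ
  hi : ℝ
  loIn : Bool
  hiIn : Bool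
  lo_lt_hi : lo < hi

namespace Cell

variable (c d : Cell) {x : ℝ}

def toSet : Set ℝ :=
  {x | (if c.loIn then c.lo ≤ x else c.lo < x) ∧ (if c.hiIn then x ≤ c.hi else x < c.hi)}

def mid : ℝ := (c.lo + c.hi) / 2

theorem lo_lt_mid : c.lo < c.mid := left_lt_add_div_two.2 c.lo_lt_hi

theorem mid_lt_hi : c.mid < c.hi := add_div_two_lt_right.2 c.lo_lt_hi

theorem toSet_subset_Icc : c.toSet ⊆ Icc c.lo c.hi := by
  rintro x ⟨h₁, h₂⟩
  constructor <;> split_ifs at h₁ h₂ <;> linarith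

theorem Ioo_subset_toSet : Ioo c.lo c.hi ⊆ c.toSet := by
  rintro x ⟨h₁, h₂⟩
  constructor <;> split_ifs <;> linarith

theorem lo_mem_toSet (h : c.loIn = true) : c.lo ∈ c.toSet :=
  ⟨by simp [h], by split_ifs <;> linarith [c.lo_lt_hi]⟩

theorem hi_mem_toSet (h : c.hiIn = true) : c.hi ∈ c.toSet :=
  ⟨by split_ifs <;> linarith [c.lo_lt_hi], by simp [h]⟩

theorem mem_toSet_of_lt_of_le (h₁ : c.lo < x) (h₂ : x ≤ c.hi) (h : c.hiIn = true) :
    x ∈ c.toSet :=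
  ⟨by split_ifs <;> linarith, by simpa [h] using h₂⟩

theorem mem_toSet_of_le_of_lt (h₁ : c.lo ≤ x) (h₂ : x < c.hi) (h : c.loIn = true) :
    x ∈ c.toSet :=
  ⟨by simpa [h] using h₁, by split_ifs <;> linarith⟩

theorem mid_mem_toSet : c.mid ∈ c.toSet := c.Ioo_subset_toSet ⟨c.lo_lt_mid, c.mid_lt_hi⟩

theorem closure_toSet : closure c.toSet = Icc c.lo c.hi :=
  (closure_minimal c.toSet_subset_Icc isClosed_Icc).antisymm
    ((closure_Ioo c.lo_lt_hi.ne).symm.subset.trans (closure_mono c.Ioo_subset_toSet))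

theorem eq_lo_or_eq_hi_of_mem_Icc (hx : x ∈ Icc c.lo c.hi) (hx' : x ∉ c.toSet) :
    (c.loIn = false ∧ x = c.lo) ∨ (c.hiIn = false ∧ x = c.hi) := by
  rcases hx.1.eq_or_lt with rfl | h₁
  · exact .inl ⟨Bool.eq_false_iff.2 fun h => hx' (c.lo_mem_toSet h), rfl⟩
  rcases hx.2.eq_or_lt with rfl | h₂
  · exact .inr ⟨Bool.eq_false_iff.2 fun h => hx' (c.hi_mem_toSet h), rfl⟩
  · exact absurd (c.Ioo_subset_toSet ⟨h₁, h₂⟩) hx'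

theorem lo_lt_of_mem (h : c.loIn = false) (hx : x ∈ c.toSet) : c.lo < x := by
  simpa [h] using hx.1

theorem lt_hi_of_mem (h : c.hiIn = false) (hx : x ∈ c.toSet) : x < c.hi := by
  simpa [h] using hx.2

theorem disjoint_toSet_of_hi_le_lo (h : c.hi ≤ d.lo) (hin : c.hiIn = false ∨ d.loIn = false) :
    Disjoint c.toSet d.toSet := by
  refine Set.disjoint_left.2 fun x hc hd => ?_
  have := (c.toSet_subset_Icc hc).2
  have := (d.toSet_subset_Icc hd).1
  rcases hin with hin | hin
  · linarith [c.lt_hi_of_mem hin hc]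
  · linarith [d.lo_lt_of_mem hin hd]

end Cell

structure IsTiling (P : ℕ → Cell) (I K : Set ℝ) : Prop where
  iUnion_eq : ⋃ j, (P j).toSet = I
  pairwise_disjoint : Pairwise (Disjoint on (fun j => (P j).toSet))
  Icc_subset : ∀ j, Icc (P j).lo (P j).hi ⊆ K

structure IsLinked (P : ℕ → Cell) : Prop where
  lo : ∀ j, (P j).loIn = false → ∃ i < j, (P i).hiIn = true ∧ (P i).hi = (P j).lo
  hi : ∀ j, (P j).hiIn = false → ∃ i < j, (P i).loIn = true ∧ (P i).lo = (P j).hi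

def interleave (P Q : ℕ → Cell) (k : ℕ) : Cell := if k % 2 = 0 then P (k / 2) else Q (k / 2)

section Interleave

variable {P Q : ℕ → Cell} {I J K L : Set ℝ}

@[simp] theorem interleave_two_mul (j : ℕ) : interleave P Q (2 * j) = P j := by
  simp [interleave]

@[simp] theorem interleave_two_mul_add_one (j : ℕ) : interleave P Q (2 * j + 1) = Q j := by
  rw [interleave, if_neg (by omega), show (2 * j + 1) / 2 = j by omega]

theorem IsTiling.interleave (hP : IsTiling P I K) (hQ : IsTiling Q J L) (hIJ : Disjoint I J) :
    IsTiling (interleave P Q) (I ∪ J) (K ∪ L) where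
  iUnion_eq := by
    rw [← hP.iUnion_eq, ← hQ.iUnion_eq]
    refine Subset.antisymm (iUnion_subset fun k => ?_) (union_subset ?_ ?_)
    · obtain ⟨j, rfl | rfl⟩ := Nat.even_or_odd' k
      · simpa using subset_union_of_subset_left (subset_iUnion (fun j => (P j).toSet) j) _
      · simpa using subset_union_of_subset_right (subset_iUnion (fun j => (Q j).toSet) j) _
    · exact iUnion_subset fun j => subset_iUnion_of_subset (2 * j) (by simp)
    · exact iUnion_subset fun j => subset_iUnion_of_subset (2 * j + 1) (by simp)
  pairwise_disjoint := by
    have hPQ : ∀ i j, Disjoint (P i).toSet (Q j).toSet := fun i j =>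
      hIJ.mono (hP.iUnion_eq ▸ subset_iUnion (fun j => (P j).toSet) i)
        (hQ.iUnion_eq ▸ subset_iUnion (fun j => (Q j).toSet) j)
    intro k k' hkk'
    obtain ⟨j, rfl | rfl⟩ := Nat.even_or_odd' k <;>
      obtain ⟨j', rfl | rfl⟩ := Nat.even_or_odd' k' <;>
      simp only [onFun, interleave_two_mul, interleave_two_mul_add_one]
    · exact hP.pairwise_disjoint (by omega : j ≠ j')
    · exact hPQ j j'
    · exact (hPQ j' j).symm
    · exact hQ.pairwise_disjoint (by omega : j ≠ j')
  Icc_subset k := by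
    obtain ⟨j, rfl | rfl⟩ := Nat.even_or_odd' k
    · simpa using (hP.Icc_subset j).trans subset_union_left
    · simpa using (hQ.Icc_subset j).trans subset_union_right

end Interleave

def ascPt (u v : ℝ) (m : ℕ) : ℝ := v - (v - u) / 2 ^ m

def descPt (u v : ℝ) (m : ℕ) : ℝ := u + (v - u) / 2 ^ m

section Chains

variable {u v x : ℝ}

theorem div_two_pow_succ_lt {a : ℝ} (ha : 0 < a) (m : ℕ) : a / 2 ^ (m + 1) < a / 2 ^ m :=
  div_lt_div_of_pos_left ha (by positivity) (pow_lt_pow_right₀ one_lt_two m.lt_succ_self)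

@[simp] theorem ascPt_zero : ascPt u v 0 = u := by simp [ascPt]

@[simp] theorem descPt_zero : descPt u v 0 = v := by simp [descPt]

theorem strictMono_ascPt (h : u < v) : StrictMono (ascPt u v) :=
  strictMono_nat_of_lt_succ fun m => by
    unfold ascPt; linarith [div_two_pow_succ_lt (sub_pos.2 h) m]

theorem strictAnti_descPt (h : u < v) : StrictAnti (descPt u v) :=
  strictAnti_nat_of_succ_lt fun m => by
    unfold descPt; linarith [div_two_pow_succ_lt (sub_pos.2 h) m]

theorem ascPt_lt (h : u < v) (m : ℕ) : ascPt u v m < v := by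
  unfold ascPt; linarith [div_pos (sub_pos.2 h) (pow_pos two_pos m)]

theorem lt_descPt (h : u < v) (m : ℕ) : u < descPt u v m := by
  unfold descPt; linarith [div_pos (sub_pos.2 h) (pow_pos two_pos m)]

theorem exists_le_ascPt (hx : x < v) : ∃ m, x ≤ ascPt u v m :=
  (exists_div_two_pow_lt (v - u) (sub_pos.2 hx)).imp fun m hm => by unfold ascPt; linarith

theorem exists_descPt_le (hx : u < x) : ∃ m, descPt u v m ≤ x :=
  (exists_div_two_pow_lt (v - u) (sub_pos.2 hx)).imp fun m hm => by unfold descPt; linarith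

def ascPiece (h : u < v) (closedAtU : Bool) (m : ℕ) : Cell where
  lo := ascPt u v m
  hi := ascPt u v (m + 1)
  loIn := closedAtU && m == 0
  hiIn := true
  lo_lt_hi := strictMono_ascPt h m.lt_succ_self

def descPiece (h : u < v) (m : ℕ) : Cell where
  lo := descPt u v (m + 1)
  hi := descPt u v m
  loIn := true
  hiIn := m == 0
  lo_lt_hi := strictAnti_descPt h m.lt_succ_self

theorem Icc_ascPiece_subset (h : u < v) (b : Bool) (m : ℕ) :
    Icc (ascPiece h b m).lo (ascPiece h b m).hi ⊆ Ico u v :=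
  Icc_subset_Ico (by simpa [ascPiece] using (strictMono_ascPt h).monotone m.zero_le)
    (ascPt_lt h _)

theorem Icc_descPiece_subset (h : u < v) (m : ℕ) :
    Icc (descPiece h m).lo (descPiece h m).hi ⊆ Ioc u v :=
  Icc_subset_Ioc (lt_descPt h _)
    (by simpa [descPiece] using (strictAnti_descPt h).antitone m.zero_le)

theorem pairwise_disjoint_ascPiece (h : u < v) (b : Bool) :
    Pairwise (Disjoint on fun m => (ascPiece h b m).toSet) :=
  (pairwise_disjoint_on _).2 fun m n hmn =>
    Cell.disjoint_toSet_of_hi_le_lo _ _ ((strictMono_ascPt h).monotone hmn)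
      (.inr (by simp [ascPiece]; omega))

theorem pairwise_disjoint_descPiece (h : u < v) :
    Pairwise (Disjoint on fun m => (descPiece h m).toSet) :=
  (pairwise_disjoint_on _).2 fun m n hmn =>
    (Cell.disjoint_toSet_of_hi_le_lo _ _ ((strictAnti_descPt h).antitone hmn)
      (.inl (by simp [descPiece]; omega))).symm

theorem exists_mem_ascPiece (h : u < v) (b : Bool) (hx : x ∈ Ioo u v) :
    ∃ m, x ∈ (ascPiece h b m).toSet := by
  obtain ⟨m, hm, hm'⟩ := exists_and_not_succ (p := fun m => ascPt u v m < x)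
    (by simpa using hx.1) ((exists_le_ascPt hx.2).imp fun m => not_lt.2)
  exact ⟨m, Cell.mem_toSet_of_lt_of_le _ hm (not_lt.1 hm') rfl⟩

theorem exists_mem_descPiece (h : u < v) (hx : x ∈ Ioc u v) :
    ∃ m, x ∈ (descPiece h m).toSet := by
  rcases hx.2.lt_or_eq with hxv | rfl
  · obtain ⟨m, hm, hm'⟩ := exists_and_not_succ (p := fun m => x < descPt u v m)
      (by simpa using hxv) ((exists_descPt_le hx.1).imp fun m => not_lt.2)
    exact ⟨m, Cell.mem_toSet_of_le_of_lt _ (not_lt.1 hm') hm rfl⟩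
  · exact ⟨0, by simpa [descPiece] using (descPiece h 0).hi_mem_toSet (by simp [descPiece])⟩

theorem isTiling_ascPiece_true (h : u < v) :
    IsTiling (ascPiece h true) (Ico u v) (Ico u v) where
  iUnion_eq := by
    refine Subset.antisymm (iUnion_subset fun m =>
      (Cell.toSet_subset_Icc _).trans (Icc_ascPiece_subset h true m)) fun x hx => ?_
    rcases hx.1.eq_or_lt with rfl | hux
    · exact mem_iUnion.2 ⟨0, by
        simpa [ascPiece] using (ascPiece h true 0).lo_mem_toSet (by simp [ascPiece])⟩
    · exact mem_iUnion.2 (exists_mem_ascPiece h true ⟨hux, hx.2⟩)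
  pairwise_disjoint := pairwise_disjoint_ascPiece h true
  Icc_subset := Icc_ascPiece_subset h true

theorem isTiling_ascPiece_false (h : u < v) :
    IsTiling (ascPiece h false) (Ioo u v) (Ico u v) where
  iUnion_eq := by
    refine Subset.antisymm (iUnion_subset fun m x hx => ?_) fun x hx =>
      mem_iUnion.2 (exists_mem_ascPiece h false hx)
    have hlo := Icc_ascPiece_subset h false m (left_mem_Icc.2 (ascPiece h false m).lo_lt_hi.le)
    have hx' := Icc_ascPiece_subset h false m ((Cell.toSet_subset_Icc _) hx)
    exact ⟨hlo.1.trans_lt ((ascPiece h false m).lo_lt_of_mem (by simp [ascPiece]) hx), hx'.2⟩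
  pairwise_disjoint := pairwise_disjoint_ascPiece h false
  Icc_subset := Icc_ascPiece_subset h false

theorem isTiling_descPiece (h : u < v) : IsTiling (descPiece h) (Ioc u v) (Ioc u v) where
  iUnion_eq := Subset.antisymm (iUnion_subset fun m =>
      (Cell.toSet_subset_Icc _).trans (Icc_descPiece_subset h m)) fun _ hx =>
    mem_iUnion.2 (exists_mem_descPiece h hx)
  pairwise_disjoint := pairwise_disjoint_descPiece h
  Icc_subset := Icc_descPiece_subset h

theorem isLinked_ascPiece_true (h : u < v) : IsLinked (ascPiece h true) where
  lo m hm := ⟨m - 1, by simp [ascPiece] at hm; omega, rfl, by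
    simp [ascPiece] at hm ⊢; congr; omega⟩
  hi m hm := by simp [ascPiece] at hm

theorem isLinked_descPiece (h : u < v) : IsLinked (descPiece h) where
  lo m hm := by simp [descPiece] at hm
  hi m hm := ⟨m - 1, by simp [descPiece] at hm; omega, rfl, by
    simp [descPiece] at hm ⊢; congr; omega⟩

def openLayout (h : u < v) : ℕ → Cell :=
  interleave (descPiece (left_lt_add_div_two.2 h)) (ascPiece (add_div_two_lt_right.2 h) false)

theorem isTiling_openLayout (h : u < v) : IsTiling (openLayout h) (Ioo u v) (Ioo u v) := by
  have hw := left_lt_add_div_two.2 h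
  have hw' := add_div_two_lt_right.2 h
  have := (isTiling_descPiece hw).interleave (isTiling_ascPiece_false hw')
    (Ioc_disjoint_Ioi_same.mono_right Ioo_subset_Ioi_self)
  rwa [Ioc_union_Ioo_eq_Ioo hw.le hw', Ioc_union_Ico_eq_Ioo hw hw'] at this

theorem isLinked_openLayout (h : u < v) : IsLinked (openLayout h) where
  lo k hk := by
    obtain ⟨j, rfl | rfl⟩ := Nat.even_or_odd' k
    · simp [openLayout, descPiece] at hk
    · rcases j with _ | j
      · exact ⟨0, by omega, by simp [openLayout, interleave, descPiece, ascPiece]⟩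
      · exact ⟨2 * j + 1, by omega, by simp [openLayout, ascPiece]⟩
  hi k hk := by
    obtain ⟨j, rfl | rfl⟩ := Nat.even_or_odd' k
    · rcases j with _ | j
      · simp [openLayout, interleave, descPiece] at hk
      · exact ⟨2 * j, by omega, by simp [openLayout, descPiece]⟩
    · simp [openLayout, ascPiece] at hk

end Chains

namespace Cell

variable (c : Cell) {x : ℝ} {k : ℕ}

def leftSide : ℕ → Cell :=
  if c.loIn then ascPiece c.lo_lt_mid true else openLayout c.lo_lt_mid

def rightSide : ℕ → Cell :=
  if c.hiIn then descPiece c.mid_lt_hi else openLayout c.mid_lt_hi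

def child : ℕ → Cell := interleave c.rightSide c.leftSide

theorem isTiling_leftSide :
    IsTiling c.leftSide (c.toSet ∩ Iio c.mid) (c.toSet ∩ Iio c.mid) := by
  have hI : c.toSet ∩ Iio c.mid =
      {x | (if c.loIn then c.lo ≤ x else c.lo < x) ∧ x < c.mid} := by
    ext x
    refine ⟨fun ⟨⟨h₁, _⟩, h₃⟩ => ⟨h₁, h₃⟩, fun ⟨h₁, h₃⟩ => ⟨⟨h₁, ?_⟩, h₃⟩⟩
    split_ifs <;> linarith [c.mid_lt_hi, show x < c.mid from h₃]
  rw [hI, leftSide]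
  cases c.loIn
  · exact isTiling_openLayout c.lo_lt_mid
  · exact isTiling_ascPiece_true c.lo_lt_mid

theorem isTiling_rightSide :
    IsTiling c.rightSide (c.toSet ∩ Ioi c.mid) (c.toSet ∩ Ioi c.mid) := by
  have hI : c.toSet ∩ Ioi c.mid =
      {x | c.mid < x ∧ (if c.hiIn then x ≤ c.hi else x < c.hi)} := by
    ext x
    refine ⟨fun ⟨⟨_, h₂⟩, h₃⟩ => ⟨h₃, h₂⟩, fun ⟨h₃, h₂⟩ => ⟨⟨?_, h₂⟩, h₃⟩⟩
    split_ifs <;> linarith [c.lo_lt_mid, show c.mid < x from h₃]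
  rw [hI, rightSide]
  cases c.hiIn
  · exact isTiling_openLayout c.mid_lt_hi
  · exact isTiling_descPiece c.mid_lt_hi

theorem isLinked_leftSide : IsLinked c.leftSide := by
  rw [leftSide]
  cases c.loIn
  · exact isLinked_openLayout c.lo_lt_mid
  · exact isLinked_ascPiece_true c.lo_lt_mid

theorem isLinked_rightSide : IsLinked c.rightSide := by
  rw [rightSide]
  cases c.hiIn
  · exact isLinked_openLayout c.mid_lt_hi
  · exact isLinked_descPiece c.mid_lt_hi

theorem isTiling_child : IsTiling c.child (c.toSet \ {c.mid}) (c.toSet \ {c.mid}) := by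
  have h := c.isTiling_rightSide.interleave c.isTiling_leftSide
    (Ioi_disjoint_Iio_same.mono inter_subset_right inter_subset_right)
  rwa [← inter_union_distrib_left, Ioi_union_Iio, ← sdiff_eq] at h

theorem closure_child_subset (k : ℕ) : closure (c.child k).toSet ⊆ c.toSet := by
  rw [closure_toSet]
  exact (c.isTiling_child.Icc_subset k).trans sdiff_subset

theorem child_subset (k : ℕ) : (c.child k).toSet ⊆ c.toSet :=
  subset_closure.trans (c.closure_child_subset k)

theorem mid_not_mem_child (k : ℕ) : c.mid ∉ (c.child k).toSet := fun h =>
  (c.isTiling_child.Icc_subset k (toSet_subset_Icc _ h)).2 rfl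

theorem disjoint_child {k k' : ℕ} (h : k ≠ k') :
    Disjoint (c.child k).toSet (c.child k').toSet :=
  c.isTiling_child.pairwise_disjoint h

theorem eq_mid_or_exists_mem_child (hx : x ∈ c.toSet) :
    x = c.mid ∨ ∃ k, x ∈ (c.child k).toSet := by
  by_cases hmid : x = c.mid
  · exact .inl hmid
  · rw [← mem_iUnion, c.isTiling_child.iUnion_eq]
    exact .inr ⟨hx, hmid⟩

theorem child_hi_sub_lo_le (k : ℕ) : (c.child k).hi - (c.child k).lo ≤ (c.hi - c.lo) / 2 := by
  have hmid : c.mid = (c.lo + c.hi) / 2 := rfl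
  obtain ⟨j, rfl | rfl⟩ := Nat.even_or_odd' k
  · have hlo := c.isTiling_rightSide.Icc_subset j (left_mem_Icc.2 (c.rightSide j).lo_lt_hi.le)
    have hhi := c.isTiling_rightSide.Icc_subset j (right_mem_Icc.2 (c.rightSide j).lo_lt_hi.le)
    simp only [child, interleave_two_mul]
    linarith [hlo.2.out, (toSet_subset_Icc _ hhi.1).2]
  · have hlo := c.isTiling_leftSide.Icc_subset j (left_mem_Icc.2 (c.leftSide j).lo_lt_hi.le)
    have hhi := c.isTiling_leftSide.Icc_subset j (right_mem_Icc.2 (c.leftSide j).lo_lt_hi.le)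
    simp only [child, interleave_two_mul_add_one]
    linarith [hhi.2.out, (toSet_subset_Icc _ hlo.1).1]

theorem exists_child_hi_eq_lo (h : (c.child k).loIn = false) :
    ∃ k' ≤ k, (c.child k').hiIn = true ∧ (c.child k').hi = (c.child k).lo := by
  obtain ⟨j, rfl | rfl⟩ := Nat.even_or_odd' k
  · obtain ⟨i, hij, hi⟩ := c.isLinked_rightSide.lo j (by simpa [child] using h)
    exact ⟨2 * i, by omega, by simpa [child] using hi⟩
  · obtain ⟨i, hij, hi⟩ := c.isLinked_leftSide.lo j (by simpa [child] using h)
    exact ⟨2 * i + 1, by omega, by simpa [child] using hi⟩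

theorem exists_child_lo_eq_hi (h : (c.child k).hiIn = false) :
    ∃ k' j, k = k' + 2 * j ∧ (c.child k').loIn = true ∧ (c.child k').lo = (c.child k).hi := by
  obtain ⟨j, rfl | rfl⟩ := Nat.even_or_odd' k
  · obtain ⟨i, hij, hi⟩ := c.isLinked_rightSide.hi j (by simpa [child] using h)
    exact ⟨2 * i, j - i, by omega, by simpa [child] using hi⟩
  · obtain ⟨i, hij, hi⟩ := c.isLinked_leftSide.hi j (by simpa [child] using h)
    exact ⟨2 * i + 1, j - i, by omega, by simpa [child] using hi⟩

theorem child_zero_hi (h : c.hiIn = true) : (c.child 0).hiIn = true ∧ (c.child 0).hi = c.hi := by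
  simp [child, interleave, rightSide, h, descPiece]

theorem child_one_lo (h : c.loIn = true) : (c.child 1).loIn = true ∧ (c.child 1).lo = c.lo := by
  simp [child, interleave, leftSide, h, ascPiece]

end Cell

def weight (p : List ℕ) : ℕ := (p.map (· + 1)).sum

/-- The path `[k₀, k₁, …]` encodes `{k₀, k₀ + 1 + k₁, …}`; its `weight` is one more than its
largest element. -/
def ofGaps (p : List ℕ) : Set ℕ := {n | ∃ q, q <+: p ∧ weight q = n + 1}

section Gaps

variable {p q : List ℕ}

@[simp] theorem weight_nil : weight [] = 0 := rfl

@[simp] theorem weight_append (p q : List ℕ) : weight (p ++ q) = weight p + weight q := by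
  simp [weight]

@[simp] theorem weight_cons (k : ℕ) (p : List ℕ) : weight (k :: p) = k + 1 + weight p := by
  simp [weight]

@[simp] theorem weight_replicate (d a : ℕ) : weight (List.replicate d a) = d * (a + 1) := by
  simp [weight]

theorem weight_le_of_prefix (h : q <+: p) : weight q ≤ weight p := by
  obtain ⟨r, rfl⟩ := h
  simp

theorem eq_of_prefix_of_weight_le (h : q <+: p) (hw : weight p ≤ weight q) : q = p := by
  obtain ⟨_ | ⟨k, r⟩, rfl⟩ := h
  · simp
  · simp only [weight_append, weight_cons] at hw; omega

theorem finite_setOf_weight_eq (m : ℕ) : {q | weight q = m}.Finite :=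
  (finite_range fun c : Composition m => c.blocks.map (· - 1)).subset fun q hq =>
    ⟨⟨q.map (· + 1), by simp, hq⟩, by simp [Function.comp_def]⟩

@[simp] theorem ofGaps_nil : ofGaps [] = ∅ := by
  ext n
  simp [ofGaps]

theorem ofGaps_append_singleton (p : List ℕ) (k : ℕ) :
    ofGaps (p ++ [k]) = insert (weight p + k) (ofGaps p) := by
  ext n
  simp only [ofGaps, List.prefix_concat_iff, mem_ofPred_eq, mem_insert_iff]
  constructor
  · rintro ⟨q, rfl | hq, hw⟩
    · simp at hw; omega
    · exact .inr ⟨q, hq, hw⟩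
  · rintro (rfl | ⟨q, hq, hw⟩)
    · exact ⟨_, .inl rfl, by simp; omega⟩
    · exact ⟨q, .inr hq, hw⟩

theorem ofGaps_subset_Iio (p : List ℕ) : ofGaps p ⊆ Iio (weight p) := fun n ⟨_, hq, hw⟩ => by
  have := weight_le_of_prefix hq
  rw [mem_Iio]; omega

theorem exists_ofGaps_eq (s : Finset ℕ) : ∃ p, ofGaps p = s := by
  refine Finset.induction_on_max s ⟨[], by simp⟩ fun a s has ⟨p, hp⟩ => ?_
  have hwa : weight p ≤ a := by
    rcases p.eq_nil_or_concat' with rfl | ⟨p', k, rfl⟩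
    · simp
    · have hmem : weight p' + k ∈ (s : Set ℕ) :=
        hp ▸ ofGaps_append_singleton p' k ▸ mem_insert _ _
      have := has _ hmem
      simp only [weight_append, weight_cons, weight_nil]
      omega
  exact ⟨p ++ [a - weight p], by
    rw [ofGaps_append_singleton, hp, Nat.add_sub_cancel' hwa, Finset.coe_insert]⟩

end Gaps

def cell (c : Cell) (p : List ℕ) : Cell := p.foldl Cell.child c

def column (c : Cell) (n : ℕ) : Set ℝ :=
  ⋃ (q : List ℕ) (_ : weight q = n + 1), (cell c q).toSet

section Cells

variable (c : Cell) {p q : List ℕ} {x y : ℝ} {n k : ℕ}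

@[simp] theorem cell_nil : cell c [] = c := rfl

@[simp] theorem cell_append_singleton (p : List ℕ) (k : ℕ) :
    cell c (p ++ [k]) = (cell c p).child k := by
  simp [cell]

theorem cell_subset_of_prefix (h : q <+: p) : (cell c p).toSet ⊆ (cell c q).toSet := by
  obtain ⟨r, rfl⟩ := h
  induction r using List.reverseRecOn with
  | nil => simp
  | append_singleton r k ih =>
    rw [← List.append_assoc, cell_append_singleton]
    exact ((cell c _).child_subset k).trans ih

theorem cell_subset (p : List ℕ) : (cell c p).toSet ⊆ c.toSet :=
  cell_subset_of_prefix c (List.nil_prefix)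

theorem cell_hi_sub_lo_le (p : List ℕ) :
    (cell c p).hi - (cell c p).lo ≤ (c.hi - c.lo) / 2 ^ p.length := by
  induction p using List.reverseRecOn with
  | nil => simp
  | append_singleton p k ih =>
    rw [cell_append_singleton, List.length_append, List.length_singleton, pow_succ, ← div_div]
    linarith [(cell c p).child_hi_sub_lo_le k]

theorem eq_of_mem_cell_of_length_eq (hp : x ∈ (cell c p).toSet) (hq : x ∈ (cell c q).toSet)
    (h : p.length = q.length) : p = q := by
  induction p using List.reverseRecOn generalizing q with
  | nil => exact (List.length_eq_zero_iff.1 h.symm).symm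
  | append_singleton p k ih =>
    obtain ⟨q, k', rfl⟩ := (q.eq_nil_or_concat').resolve_left (by rintro rfl; simp at h)
    simp only [List.length_append, List.length_singleton, add_left_inj] at h
    rw [cell_append_singleton] at hp hq
    obtain rfl := ih ((cell c p).child_subset k hp) ((cell c q).child_subset k' hq) h
    by_contra hkk'
    exact Set.disjoint_left.1 ((cell c p).disjoint_child fun h => hkk' (by rw [h])) hp hq

theorem prefix_or_prefix_of_mem_cell (hp : x ∈ (cell c p).toSet) (hq : x ∈ (cell c q).toSet) :
    p <+: q ∨ q <+: p := by
  wlog h : p.length ≤ q.length generalizing p q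
  · exact (this hq hp (le_of_not_ge h)).symm
  left
  have hpq := eq_of_mem_cell_of_length_eq c hp
    (cell_subset_of_prefix c (q.take_prefix p.length) hq) (by simp [h])
  exact hpq ▸ q.take_prefix p.length

theorem cell_append_replicate_zero (h : (cell c q).hiIn = true) (d : ℕ) :
    (cell c (q ++ List.replicate d 0)).hiIn = true ∧
      (cell c (q ++ List.replicate d 0)).hi = (cell c q).hi := by
  induction d with
  | zero => simpa using h
  | succ d ih =>
    rw [List.replicate_succ', ← List.append_assoc, cell_append_singleton, ← ih.2]
    exact (cell c _).child_zero_hi ih.1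

theorem cell_append_replicate_one (h : (cell c q).loIn = true) (d : ℕ) :
    (cell c (q ++ List.replicate d 1)).loIn = true ∧
      (cell c (q ++ List.replicate d 1)).lo = (cell c q).lo := by
  induction d with
  | zero => simpa using h
  | succ d ih =>
    rw [List.replicate_succ', ← List.append_assoc, cell_append_singleton, ← ih.2]
    exact (cell c _).child_one_lo ih.1

theorem mem_column : x ∈ column c n ↔ ∃ q, weight q = n + 1 ∧ x ∈ (cell c q).toSet := by
  simp [column]

theorem mem_column_of_mem_cell (hx : x ∈ (cell c (p ++ [k])).toSet) :
    x ∈ column c (weight p + k) :=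
  (mem_column c).2 ⟨_, by simp; omega, hx⟩

theorem closure_cell_subset_column (p : List ℕ) (k : ℕ) :
    closure (cell c (p ++ [k])).toSet ⊆ column c (weight p + k) := by
  intro y hy
  rw [Cell.closure_toSet] at hy
  by_cases hmem : y ∈ (cell c (p ++ [k])).toSet
  · exact mem_column_of_mem_cell c hmem
  rw [cell_append_singleton] at hy hmem
  rcases Cell.eq_lo_or_eq_hi_of_mem_Icc _ hy hmem with ⟨hlo, rfl⟩ | ⟨hhi, rfl⟩
  · obtain ⟨k', hk', hin, heq⟩ := (cell c p).exists_child_hi_eq_lo hlo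
    rw [← cell_append_singleton] at hin heq
    have := cell_append_replicate_zero c hin (k - k')
    refine (mem_column c).2 ⟨_, ?_, heq ▸ this.2 ▸ Cell.hi_mem_toSet _ this.1⟩
    simp; omega
  · obtain ⟨k', j, rfl, hin, heq⟩ := (cell c p).exists_child_lo_eq_hi hhi
    rw [← cell_append_singleton] at hin heq
    have := cell_append_replicate_one c hin j
    refine (mem_column c).2 ⟨_, ?_, heq ▸ this.2 ▸ Cell.lo_mem_toSet _ this.1⟩
    simp; ring

theorem isClosed_column (n : ℕ) : IsClosed (column c n) := by
  have h : column c n = ⋃ q ∈ {q | weight q = n + 1}, closure (cell c q).toSet := by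
    refine (biUnion_mono subset_rfl fun q _ => subset_closure).antisymm
      (iUnion₂_subset fun q hq => ?_)
    replace hq : weight q = n + 1 := hq
    obtain ⟨p, k, rfl⟩ := q.eq_nil_or_concat'.resolve_left (by rintro rfl; simp at hq)
    simp only [weight_append, weight_cons, weight_nil] at hq
    obtain rfl : n = weight p + k := by omega
    exact closure_cell_subset_column c p k
  rw [h]
  exact (finite_setOf_weight_eq _).isClosed_biUnion fun _ _ => isClosed_closure

end Cells

section Sections

variable (c : Cell) {p : List ℕ} {x y : ℝ} {n k k' : ℕ}

theorem mem_column_iff_of_mem_cell (hx : x ∈ (cell c p).toSet) (hn : n < weight p) :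
    x ∈ column c n ↔ n ∈ ofGaps p := by
  rw [mem_column]
  refine ⟨fun ⟨q, hq, hxq⟩ => ⟨q, ?_, hq⟩,
    fun ⟨q, hq, hw⟩ => ⟨q, hw, cell_subset_of_prefix c hq hx⟩⟩
  rcases prefix_or_prefix_of_mem_cell c hxq hx with h | h
  · exact h
  · exact (eq_of_prefix_of_weight_le h (by omega)) ▸ List.prefix_refl p

theorem mid_mem_column_iff : (cell c p).mid ∈ column c n ↔ n ∈ ofGaps p := by
  have hmid := (cell c p).mid_mem_toSet
  rw [mem_column]
  refine ⟨fun ⟨q, hq, hxq⟩ => ⟨q, ?_, hq⟩,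
    fun ⟨q, hq, hw⟩ => ⟨q, hw, cell_subset_of_prefix c hq hmid⟩⟩
  rcases prefix_or_prefix_of_mem_cell c hxq hmid with h | ⟨_ | ⟨k, r⟩, rfl⟩
  · exact h
  · exact (List.append_nil p).symm ▸ List.prefix_refl p
  · have := cell_subset_of_prefix c (q := p ++ [k]) ⟨r, by simp⟩ hxq
    rw [cell_append_singleton] at this
    exact absurd this ((cell c p).mid_not_mem_child k)

theorem mid_not_mem_column (p : List ℕ) (k : ℕ) : (cell c p).mid ∉ column c (weight p + k) :=
  fun h => by
    have := ofGaps_subset_Iio p ((mid_mem_column_iff c).1 h)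
    rw [mem_Iio] at this; omega

theorem not_mem_column_of_lt (hy : y ∈ (cell c (p ++ [k'])).toSet) (hk : k < k') :
    y ∉ column c (weight p + k) := by
  rw [mem_column_iff_of_mem_cell c hy (by simp; omega), ofGaps_append_singleton]
  rintro (h | h)
  · omega
  · have := ofGaps_subset_Iio p h
    rw [mem_Iio] at this; omega

theorem eq_mid_or_exists_mem_cell_append (hx : x ∈ (cell c p).toSet) :
    x = (cell c p).mid ∨ ∃ k, x ∈ (cell c (p ++ [k])).toSet := by
  simpa only [cell_append_singleton] using (cell c p).eq_mid_or_exists_mem_child hx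

theorem exists_mem_cell_append_singleton (hx : x ∈ (cell c p).toSet)
    (hy : y ∈ (cell c p).toSet) (hxy : ∀ n, x ∈ column c n ↔ y ∈ column c n) (hne : x ≠ y) :
    ∃ k, x ∈ (cell c (p ++ [k])).toSet ∧ y ∈ (cell c (p ++ [k])).toSet := by
  rcases eq_mid_or_exists_mem_cell_append c hx with rfl | ⟨k, hk⟩ <;>
    rcases eq_mid_or_exists_mem_cell_append c hy with rfl | ⟨k', hk'⟩
  · exact absurd rfl hne
  · exact absurd ((hxy _).2 (mem_column_of_mem_cell c hk')) (mid_not_mem_column c p k')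
  · exact absurd ((hxy _).1 (mem_column_of_mem_cell c hk)) (mid_not_mem_column c p k)
  · rcases lt_trichotomy k k' with h | rfl | h
    · exact absurd ((hxy _).1 (mem_column_of_mem_cell c hk)) (not_mem_column_of_lt c hk' h)
    · exact ⟨k, hk, hk'⟩
    · exact absurd ((hxy _).2 (mem_column_of_mem_cell c hk')) (not_mem_column_of_lt c hk h)

theorem eq_of_forall_mem_column_iff (hx : x ∈ c.toSet) (hy : y ∈ c.toSet)
    (hxy : ∀ n, x ∈ column c n ↔ y ∈ column c n) : x = y := by
  by_contra hne
  have hcells : ∀ m, ∃ p : List ℕ,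
      p.length = m ∧ x ∈ (cell c p).toSet ∧ y ∈ (cell c p).toSet := by
    intro m
    induction m with
    | zero => exact ⟨[], rfl, hx, hy⟩
    | succ m ih =>
      obtain ⟨p, rfl, hxp, hyp⟩ := ih
      exact ⟨_, by simp, (exists_mem_cell_append_singleton c hxp hyp hxy hne).choose_spec⟩
  obtain ⟨m, hm⟩ := exists_div_two_pow_lt (c.hi - c.lo) (abs_pos.2 (sub_ne_zero.2 hne))
  obtain ⟨p, rfl, hxp, hyp⟩ := hcells m
  have hx' := (cell c p).toSet_subset_Icc hxp
  have hy' := (cell c p).toSet_subset_Icc hyp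
  have := cell_hi_sub_lo_le c p
  have : |x - y| ≤ (cell c p).hi - (cell c p).lo :=
    abs_sub_le_iff.2 ⟨by linarith [hx'.2, hy'.1], by linarith [hx'.1, hy'.2]⟩
  linarith

theorem exists_forall_mem_cell {b : ℕ → List ℕ} (hb : ∀ m, ∃ k, b (m + 1) = b m ++ [k]) :
    ∃ x, ∀ m, x ∈ (cell c (b m)).toSet := by
  have hsub : ∀ m, closure (cell c (b (m + 1))).toSet ⊆ (cell c (b m)).toSet := fun m => by
    obtain ⟨k, hk⟩ := hb m
    rw [hk, cell_append_singleton]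
    exact (cell c (b m)).closure_child_subset k
  obtain ⟨x, hx⟩ := IsCompact.nonempty_iInter_of_sequence_nonempty_isCompact_isClosed
    (fun m => closure (cell c (b m)).toSet) (fun m => (hsub m).trans subset_closure)
    (fun m => ⟨_, subset_closure (cell c (b m)).mid_mem_toSet⟩)
    (by rw [Cell.closure_toSet]; exact isCompact_Icc) (fun _ => isClosed_closure)
  exact ⟨x, fun m => hsub m (mem_iInter.1 hx (m + 1))⟩

def branch (S : Set ℕ) : ℕ → List ℕ
  | 0 => []
  | m + 1 => branch S m ++ [sInf {e | e ∈ S ∧ weight (branch S m) ≤ e} - weight (branch S m)]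

theorem ofGaps_branch {S : Set ℕ} (hS : S.Infinite) (m : ℕ) :
    ofGaps (branch S m) = S ∩ Iio (weight (branch S m)) ∧ m ≤ weight (branch S m) := by
  induction m with
  | zero => simp [branch]
  | succ m ih =>
    set w := weight (branch S m)
    set e := sInf {e | e ∈ S ∧ w ≤ e}
    obtain ⟨b, hbS, hwb⟩ := hS.exists_gt w
    obtain ⟨heS, hwe⟩ : e ∈ S ∧ w ≤ e := Nat.sInf_mem (s := {e | e ∈ S ∧ w ≤ e}) ⟨b, hbS, hwb.le⟩
    have hbranch : branch S (m + 1) = branch S m ++ [e - w] := rfl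
    have hw : weight (branch S (m + 1)) = e + 1 := by
      rw [hbranch, weight_append, weight_cons, weight_nil]; omega
    rw [hw]
    refine ⟨?_, by omega⟩
    rw [hbranch, ofGaps_append_singleton, ih.1, Nat.add_sub_cancel' hwe]
    ext n
    simp only [mem_insert_iff, mem_inter_iff, mem_Iio]
    constructor
    · rintro (rfl | ⟨hn, hnw⟩)
      · exact ⟨heS, by omega⟩
      · exact ⟨hn, by omega⟩
    · rintro ⟨hn, hne⟩
      by_cases hnw : n < w
      · exact .inr ⟨hn, hnw⟩
      · exact .inl (le_antisymm (by omega) (Nat.sInf_le ⟨hn, by omega⟩))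

theorem exists_mem_column_iff (S : Set ℕ) : ∃ x ∈ c.toSet, ∀ n, x ∈ column c n ↔ n ∈ S := by
  rcases S.finite_or_infinite with hS | hS
  · obtain ⟨p, hp⟩ := exists_ofGaps_eq hS.toFinset
    refine ⟨(cell c p).mid, cell_subset c p (cell c p).mid_mem_toSet, fun n => ?_⟩
    rw [mid_mem_column_iff, hp, hS.coe_toFinset]
  · obtain ⟨x, hx⟩ := exists_forall_mem_cell c (b := branch S) fun m => ⟨_, rfl⟩
    refine ⟨x, cell_subset c _ (hx 0), fun n => ?_⟩
    have hn : n < weight (branch S (n + 1)) := (ofGaps_branch hS (n + 1)).2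
    rw [mem_column_iff_of_mem_cell c (hx (n + 1)) hn, (ofGaps_branch hS _).1]
    simp [hn]

end Sections

theorem isClosed_setOf_mem_of_discreteTopology {X Y : Type*} [TopologicalSpace X]
    [TopologicalSpace Y] [DiscreteTopology Y] {A : Y → Set X} (hA : ∀ y, IsClosed (A y)) :
    IsClosed {q : X × Y | q.1 ∈ A q.2} := by
  have h : {q : X × Y | q.1 ∈ A q.2}ᶜ = ⋃ y, (A y)ᶜ ×ˢ {y} := by
    ext ⟨x, y⟩
    simp
  rw [← isOpen_compl_iff, h]
  exact isOpen_iUnion fun y => (hA y).isOpen_compl.prod (isOpen_discrete _)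

end UniquelyUniversal

open UniquelyUniversal in
theorem uu_closed_openInterval_nat :
    ∃ V : Set ((Set.Ioo (-1:ℝ) 1) × ℕ), IsClosed V ∧
      ∀ S : Set ℕ, ∃! x : Set.Ioo (-1:ℝ) 1, {n : ℕ | (x, n) ∈ V} = S := by
  let c : Cell := ⟨-1, 1, false, false, by norm_num⟩
  have hc : c.toSet = Ioo (-1) 1 := by ext; simp [c, Cell.toSet]
  refine ⟨{q | (q.1 : ℝ) ∈ column c q.2}, isClosed_setOf_mem_of_discreteTopology fun n =>
    (isClosed_column c n).preimage continuous_subtype_val, fun S => ?_⟩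
  obtain ⟨x, hx, hxS⟩ := exists_mem_column_iff c S
  refine ⟨⟨x, hc.subset hx⟩, Set.ext hxS, fun y hy => Subtype.ext ?_⟩
  refine eq_of_forall_mem_column_iff c (hc.symm.subset y.2) hx fun n => ?_
  rw [hxS]
  exact Set.ext_iff.1 hy n

end
end

section
/- There exists a closed set W ⊆ [0,1] × ℕ (with [0,1] its usual topology and ℕ discrete) such that for every subset S ⊆ ℕ whose complement ℕ \ S is infinite, there is exactly one point x ∈ [0,1] with horizontal section W(x) = {n ∈ ℕ : (x,n) ∈ W} equal to S. -/
open Cardinal Set Metric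

noncomputable section CUCS

private def ff (a : ℕ → Bool) : ℝ := (2/3) * cantorFunction (1/3) a

private lemma ff_nonneg (a : ℕ → Bool) : 0 ≤ ff a := by
  apply mul_nonneg (by norm_num)
  exact tsum_nonneg fun n => cantorFunctionAux_nonneg (by norm_num)

private lemma ff_le_one (a : ℕ → Bool) : ff a ≤ 1 := by
  have h : cantorFunction (1/3) a ≤ (3/2 : ℝ) := by
    have hgeo := tsum_geometric_of_lt_one (by norm_num : (0:ℝ) ≤ 1/3) (by norm_num : (1/3:ℝ) < 1)
    have hle : cantorFunction (1/3) a ≤ ∑' n : ℕ, (1/3:ℝ)^n := by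
      apply Summable.tsum_le_tsum _ (summable_cantor_function a (by norm_num) (by norm_num))
        (summable_geometric_of_lt_one (by norm_num) (by norm_num))
      intro n
      cases h : a n <;> simp [cantorFunctionAux, h] <;> positivity
    rw [hgeo] at hle
    linarith
  unfold ff; linarith

private lemma ff_cont : Continuous ff := by
  apply Continuous.mul continuous_const
  apply continuous_tsum (u := fun n => (1/3:ℝ)^n)
    (fun n => ?_) (summable_geometric_of_lt_one (by norm_num) (by norm_num)) (fun n a => ?_)
  · show Continuous fun a : ℕ → Bool => cond (a n) ((1/3:ℝ)^n) 0
    exact Continuous.comp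
      (continuous_of_discreteTopology (f := fun b : Bool => cond b ((1/3:ℝ)^n) 0))
      (continuous_apply n)
  · cases h : a n <;> simp [cantorFunctionAux, h, abs_of_nonneg] <;> positivity

private lemma ff_inj : Function.Injective ff := by
  intro a b hab
  exact cantorFunction_injective (by norm_num) (by norm_num)
    (mul_left_cancel₀ (by norm_num : (2/3:ℝ) ≠ 0) hab)

private def FF (a : ℕ → Bool) : Set.Icc (0:ℝ) 1 := ⟨ff a, ff_nonneg a, ff_le_one a⟩

private lemma FF_cont : Continuous FF := Continuous.subtype_mk ff_cont _

private lemma FF_inj : Function.Injective FF := fun a b h => ff_inj (congrArg Subtype.val h)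

private def CC : Set (Set.Icc (0:ℝ) 1) := Set.range FF

private lemma CC_closed : IsClosed CC := (isCompact_range FF_cont).isClosed

private def AA (n : ℕ) : Set (Set.Icc (0:ℝ) 1) :=
  (FF '' {a | a n = true}) ∪ {x | 1/((n:ℝ)+1) ≤ infDist x CC}

private lemma AA_closed (n : ℕ) : IsClosed (AA n) := by
  apply IsClosed.union
  · apply IsCompact.isClosed
    apply IsCompact.image _ FF_cont
    exact (isClosed_eq (continuous_apply n) continuous_const).isCompact
  · exact isClosed_le continuous_const (continuous_infDist_pt CC)

private lemma mem_AA_FF (b : ℕ → Bool) (n : ℕ) : FF b ∈ AA n ↔ b n = true := by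
  constructor
  · rintro (⟨a, ha, hFa⟩ | h)
    · rw [FF_inj hFa] at ha; exact ha
    · exfalso
      have h0 : infDist (FF b) CC = 0 := infDist_zero_of_mem ⟨b, rfl⟩
      simp only [Set.mem_setOf_eq, h0] at h
      have : (0:ℝ) < 1/((n:ℝ)+1) := by positivity
      linarith
  · intro h; exact Or.inl ⟨b, h, rfl⟩

theorem closed_universal_coinfinite_sections :
    ∃ W : Set ((Set.Icc (0:ℝ) 1) × ℕ), IsClosed W ∧
      ∀ S : Set ℕ, Sᶜ.Infinite →
        ∃! x : Set.Icc (0:ℝ) 1, {n : ℕ | (x, n) ∈ W} = S := by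
  classical
  refine ⟨{p | p.1 ∈ AA p.2}, ?_, ?_⟩
  · rw [← isOpen_compl_iff]
    have : {p : (Set.Icc (0:ℝ) 1) × ℕ | p.1 ∈ AA p.2}ᶜ
        = ⋃ n, (AA n)ᶜ ×ˢ ({n} : Set ℕ) := by
      ext ⟨x, n⟩
      simp only [Set.mem_compl_iff, Set.mem_setOf_eq, Set.mem_iUnion, Set.mem_prod,
        Set.mem_singleton_iff]
      constructor
      · intro h; exact ⟨n, h, rfl⟩
      · rintro ⟨m, hm, rfl⟩; exact hm
    rw [this]
    exact isOpen_iUnion fun n =>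
      ((AA_closed n).isOpen_compl).prod (isOpen_discrete _)
  · intro S hS
    set a : ℕ → Bool := fun n => decide (n ∈ S) with ha
    have key : ∀ b : ℕ → Bool, {n : ℕ | FF b ∈ AA n} = {n | b n = true} := by
      intro b; ext n; simpa using mem_AA_FF b n
    have hsec : {n : ℕ | FF a ∈ AA n} = S := by
      rw [key]; ext n; simp [ha]
    refine ⟨FF a, hsec, ?_⟩
    intro y hy
    -- y must be in CC
    have hyC : y ∈ CC := by
      by_contra hyC
      have hpos : 0 < infDist y CC :=
        (CC_closed.notMem_iff_infDist_pos ⟨FF a, a, rfl⟩).mp hyC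
      obtain ⟨N, hN⟩ := exists_nat_gt (1 / infDist y CC)
      obtain ⟨n, hnS, hnN⟩ := hS.exists_gt N
      apply hnS
      rw [← hy]
      show y ∈ AA n
      right
      show 1/((n:ℝ)+1) ≤ infDist y CC
      rw [div_le_iff₀ (by positivity)]
      rw [div_lt_iff₀ hpos] at hN
      have : (N:ℝ) < (n:ℝ) + 1 := by exact_mod_cast Nat.lt_succ_of_lt hnN
      nlinarith [hpos]
    obtain ⟨b, rfl⟩ := hyC
    have hb : {n | b n = true} = S := by rw [← key b]; exact hy
    have : b = a := by
      funext n
      have h1 : b n = true ↔ n ∈ S := by rw [← hb]; rfl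
      have h2 : a n = true ↔ n ∈ S := by simp [ha]
      cases hbn : b n <;> cases han : a n <;>
        simp_all
    rw [this]

end CUCS
end
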